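/- arXiv:1710.02330 — 8 statements merged into one kernel-verified Lean document; each statement's English description precedes it below -/
import Mathlib

section
/- For every field K and every natural number n there is no injective group homomorphism from the direct product ∏_{p odd prime} (ℤ/pℤ)ˣ (the product, over all odd primes p, of the unit groups of ℤ/pℤ) into GL_n(K). In other words, the group ∏_{p odd prime} (ℤ/pℤ)ˣ is not linear over any field. -/
/-!
Fix a prime `ℓ` invertible in `K` (`ℓ = 2` or `3`). By Dirichlet there are infinitely many
primes `p ≡ 1 mod ℓ`, and each `(ℤ/pℤ)ˣ` contains an element of order `ℓ`, so the product has
an infinite abelian subgroup of exponent `ℓ`. In `GL_n` of the algebraic closure of `K`, a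
commuting family of endomorphisms with `f ^ ℓ = 1` is simultaneously diagonalisable (as
`X ^ ℓ - 1` is separable) with eigenvalues among the `ℓ`-th roots of unity; a member is
determined by its eigenvalues on the finitely many simultaneous eigenspaces, so the family is
finite.
-/

open Polynomial Module

namespace Module.End

variable {L V : Type*} [Field L] [AddCommGroup V] [Module L V]

theorem isSemisimple_of_pow_eq_one {f : End L V} {ℓ : ℕ} (hℓ : (ℓ : L) ≠ 0) (hf : f ^ ℓ = 1) :
    f.IsSemisimple :=
  isSemisimple_of_squarefree_aeval_eq_zero (p := X ^ ℓ - C 1)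
    (separable_X_pow_sub_C 1 hℓ one_ne_zero).squarefree (by simp [hf])

theorem HasEigenvector.pow_eq_one {f : End L V} {μ : L} {x : V} (hx : f.HasEigenvector μ x)
    {ℓ : ℕ} (hf : f ^ ℓ = 1) : μ ^ ℓ = 1 := by
  have := hx.pow_apply ℓ
  rw [hf, one_apply] at this
  exact smul_left_injective L hx.2 (by simp [← this])

theorem apply_eq_smul_of_mem_iInf_maxGenEigenspace {ι : Type*} {f : ι → End L V}
    (hf : ∀ i, (f i).IsFinitelySemisimple) {χ : ι → L} {x : V}
    (hx : x ∈ ⨅ i, (f i).maxGenEigenspace (χ i)) (i : ι) : f i x = χ i • x := by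
  rw [← mem_eigenspace_iff, ← (hf i).maxGenEigenspace_eq_eigenspace]
  exact Submodule.mem_iInf _ |>.mp hx i

theorem finite_of_pairwise_commute_of_pow_eq_one [IsAlgClosed L] [FiniteDimensional L V]
    {S : Set (End L V)} (hS : S.Pairwise Commute) {ℓ : ℕ} (hℓ : (ℓ : L) ≠ 0)
    (hpow : ∀ f ∈ S, f ^ ℓ = 1) : S.Finite := by
  classical
  let P : (S → L) → Submodule L V := fun χ ↦ ⨅ f : S, (f : End L V).maxGenEigenspace (χ f)
  have hcomm (f g : S) : Commute (f : End L V) g := by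
    rcases eq_or_ne f g with rfl | hfg
    · exact Commute.refl _
    · exact hS f.2 g.2 (Subtype.coe_ne_coe.mpr hfg)
  have hP_top : ⨆ χ, P χ = ⊤ :=
    iSup_iInf_maxGenEigenspace_eq_top_of_iSup_maxGenEigenspace_eq_top_of_commute _
      (fun f g _ ↦ hcomm f g) fun f ↦ iSup_maxGenEigenspace_eq_top _
  have : Fintype {χ // P χ ≠ ⊥} :=
    (independent_iInf_maxGenEigenspace_of_forall_mapsTo _ fun f g μ ↦
      mapsTo_maxGenEigenspace_of_comm (hcomm g f) μ).fintypeNeBotOfFiniteDimensional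
  have hsmul {χ : S → L} {x : V} (hx : x ∈ P χ) (f : S) : (f : End L V) x = χ f • x :=
    apply_eq_smul_of_mem_iInf_maxGenEigenspace
      (fun f : S ↦ (isSemisimple_of_pow_eq_one hℓ (hpow f f.2)).isFinitelySemisimple) hx f
  have hroot (χ : {χ // P χ ≠ ⊥}) (f : S) : χ.1 f ∈ nthRootsFinset ℓ (1 : L) := by
    obtain ⟨x, hx, hx0⟩ := Submodule.exists_mem_ne_zero_of_ne_bot χ.2
    rw [mem_nthRootsFinset (Nat.pos_of_ne_zero (by rintro rfl; simp at hℓ))]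
    exact HasEigenvector.pow_eq_one ⟨mem_eigenspace_iff.mpr (hsmul hx f), hx0⟩ (hpow f f.2)
  let Φ : S → {χ // P χ ≠ ⊥} → nthRootsFinset ℓ (1 : L) := fun f χ ↦ ⟨χ.1 f, hroot χ f⟩
  have hΦ : Function.Injective Φ := by
    intro f g hfg
    refine Subtype.ext <| LinearMap.eqLocus_eq_top.mp <| top_unique <|
      hP_top ▸ iSup_le fun χ x hx ↦ ?_
    by_cases hχ : P χ = ⊥
    · rw [hχ, Submodule.mem_bot] at hx
      simp [hx]
    · have := congrArg Subtype.val (congrFun hfg ⟨χ, hχ⟩)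
      simp only [Φ] at this
      rw [LinearMap.mem_eqLocus, hsmul hx, hsmul hx, this]
  exact Set.finite_coe_iff.mp (_root_.Finite.of_injective Φ hΦ)

end Module.End

theorem exists_prime_natCast_ne_zero (R : Type*) [NonAssocSemiring R] [Nontrivial R] :
    ∃ ℓ : ℕ, ℓ.Prime ∧ (ℓ : R) ≠ 0 := by
  by_cases h2 : (2 : R) = 0
  · refine ⟨3, Nat.prime_three, ?_⟩
    rw [show ((3 : ℕ) : R) = 2 + 1 by norm_num, h2, zero_add]
    exact one_ne_zero
  · exact ⟨2, Nat.prime_two, by exact_mod_cast h2⟩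

theorem ZMod.exists_units_ne_one_pow_eq_one {p ℓ : ℕ} [Fact p.Prime] (hℓ : ℓ.Prime)
    (hpℓ : p ≡ 1 [MOD ℓ]) : ∃ g : (ZMod p)ˣ, g ≠ 1 ∧ g ^ ℓ = 1 := by
  have : Fact ℓ.Prime := ⟨hℓ⟩
  have hdvd : ℓ ∣ Fintype.card (ZMod p)ˣ := by
    rw [ZMod.card_units_eq_totient, Nat.totient_prime Fact.out]
    exact (Nat.modEq_iff_dvd' (Fact.out : p.Prime).one_le).mp hpℓ.symm
  obtain ⟨g, hg⟩ := exists_prime_orderOf_dvd_card ℓ hdvd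
  refine ⟨g, fun h ↦ hℓ.one_lt.ne' ?_, hg ▸ pow_orderOf_eq_one g⟩
  rw [← hg, h, orderOf_one]

theorem infinite_setOf_pow_eq_one_pi_units_zmod {ℓ : ℕ} (hℓ : ℓ.Prime) :
    {x : ∀ p : {p : ℕ // p.Prime ∧ Odd p}, (ZMod p.1)ˣ | x ^ ℓ = 1}.Infinite := by
  let s : Set {p : ℕ // p.Prime ∧ Odd p} := {p | p.1 ≡ 1 [MOD ℓ]}
  have hs : s.Infinite := by
    refine Set.Infinite.of_image Subtype.val <|
      ((Nat.infinite_setOfPred_prime_modEq_one hℓ.ne_zero).sdiff (Set.finite_singleton 2)).mono ?_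
    rintro p ⟨⟨hp, hp1⟩, hp2⟩
    exact ⟨⟨p, hp, hp.odd_of_ne_two hp2⟩, hp1, rfl⟩
  have (p : s) : ∃ g : (ZMod p.1.1)ˣ, g ≠ 1 ∧ g ^ ℓ = 1 :=
    have : Fact p.1.1.Prime := ⟨p.1.2.1⟩
    ZMod.exists_units_ne_one_pow_eq_one hℓ p.2
  choose g hg1 hgℓ using this
  have : Infinite s := hs.to_subtype
  refine Set.infinite_coe_iff.mp <| Infinite.of_injective
    (fun p : s ↦ ⟨Pi.mulSingle p.1 (g p), ?_⟩) fun p q hpq ↦ ?_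
  · change Pi.mulSingle _ _ ^ ℓ = 1
    rw [← Pi.mulSingle_pow, hgℓ, Pi.mulSingle_one]
  · by_contra hne
    have := congrFun (congrArg Subtype.val hpq) p.1
    dsimp only at this
    rw [Pi.mulSingle_eq_same, Pi.mulSingle_eq_of_ne (Subtype.coe_ne_coe.mpr hne)] at this
    exact hg1 p this

/-- The direct product, over all odd primes `p`, of the unit groups `(ℤ/pℤ)ˣ`
is not linear over any field: for every field `K` and every `n`, there is no
injective group homomorphism from it into `GL n K`. -/
theorem stmt_0 (K : Type) [Field K] (n : ℕ) :
    ¬ ∃ f : (∀ p : {p : ℕ // p.Prime ∧ Odd p}, (ZMod p.1)ˣ) →* GL (Fin n) K,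
      Function.Injective f := by
  rintro ⟨f, hf⟩
  let L := AlgebraicClosure K
  obtain ⟨ℓ, hℓ, hℓL⟩ := exists_prime_natCast_ne_zero L
  let ρ : GL (Fin n) K →* Module.End L (Fin n → L) :=
    (Matrix.toLinAlgEquiv' : Matrix (Fin n) (Fin n) L ≃ₐ[L] _).toMonoidHom.comp <|
      (algebraMap K L).mapMatrix.toMonoidHom.comp (Units.coeHom _)
  have hρ : Function.Injective ρ := Matrix.toLinAlgEquiv'.injective.comp <|
    (Matrix.map_injective (algebraMap K L).injective).comp Units.val_injective
  refine infinite_setOf_pow_eq_one_pi_units_zmod hℓ <|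
    Set.Finite.of_finite_image ?_ (hρ.comp hf).injOn
  refine Module.End.finite_of_pairwise_commute_of_pow_eq_one ?_ hℓL ?_
  · rintro _ ⟨x, -, rfl⟩ _ ⟨y, -, rfl⟩ -
    exact (Commute.all x y).map (ρ.comp f)
  · rintro _ ⟨x, hx, rfl⟩
    rw [Function.comp_apply, ← map_pow, ← map_pow, Set.mem_ofPred_eq.mp hx, map_one, map_one]
end

section
/- Let S be a group such that the second integral group homology H₂(S; ℤ) with trivial coefficients vanishes (i.e. groupHomology of the trivial ℤ-representation in degree 2 is zero) and such that the abelianization of S is a free abelian group (i.e. a free ℤ-module). Then for every abelian group A, regarded as a trivial S-module, the second group cohomology H²(S; A) vanishes. -/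
/-! We define the second integral homology group `H₂(S; ℤ)` of a group `S` (with trivial
coefficients) explicitly via the inhomogeneous bar complex
`… → ℤ[S × S × S] → ℤ[S × S] → ℤ[S] → ℤ`, as the kernel of the boundary map in degree 2
modulo the image of the boundary map in degree 3. -/

/-- The degree-2 boundary map `ℤ[S × S] → ℤ[S]` of the bar complex of `S` with trivial
`ℤ`-coefficients: `d(g, h) = [h] - [g * h] + [g]`. -/
noncomputable def barD2 (S : Type) [Group S] : ((S × S) →₀ ℤ) →+ (S →₀ ℤ) :=
  Finsupp.liftAddHom fun p => (zmultiplesHom _)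
    (Finsupp.single p.2 1 - Finsupp.single (p.1 * p.2) 1 + Finsupp.single p.1 1)

/-- The degree-3 boundary map `ℤ[S × S × S] → ℤ[S × S]` of the bar complex of `S` with
trivial `ℤ`-coefficients: `d(g, h, k) = [h, k] - [g * h, k] + [g, h * k] - [g, h]`. -/
noncomputable def barD3 (S : Type) [Group S] : ((S × S × S) →₀ ℤ) →+ ((S × S) →₀ ℤ) :=
  Finsupp.liftAddHom fun p => (zmultiplesHom _)
    (Finsupp.single (p.2.1, p.2.2) 1 - Finsupp.single (p.1 * p.2.1, p.2.2) 1
      + Finsupp.single (p.1, p.2.1 * p.2.2) 1 - Finsupp.single (p.1, p.2.1) 1)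

/-- The second integral group homology `H₂(S; ℤ)` with trivial coefficients:
the kernel of the degree-2 boundary map modulo the image of the degree-3 boundary map. -/
noncomputable def H2Z (S : Type) [Group S] : Type :=
  (barD2 S).ker ⧸ ((barD3 S).range.addSubgroupOf (barD2 S).ker)

noncomputable instance (S : Type) [Group S] : AddGroup (H2Z S) := by
  unfold H2Z; infer_instance

/-! A trivial 2-cocycle `f` is a linear form on `ℤ[S × S]` killing the 3-boundaries. Since
`H₂(S; ℤ) = 0` it kills all 2-cycles, i.e. the kernel of `d₂`, so it descends to the boundaries
`B₁ = d₂(ℤ[S × S]) ≤ ℤ[S]`. The quotient `ℤ[S] / B₁` is the abelianization of `S`, which is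
free, so `B₁` is a direct summand of `ℤ[S]` and the form extends to `x : ℤ[S] → A`; then
`f = d x` is a coboundary. -/

section ProjectiveQuotient

variable {R M N A : Type*} [Ring R] [AddCommGroup M] [Module R M] [AddCommGroup N] [Module R N]
  [AddCommGroup A] [Module R A]

theorem Submodule.exists_comp_subtype_eq_of_projective_quotient (p : Submodule R M)
    [Module.Projective R (M ⧸ p)] (f : p →ₗ[R] A) : ∃ g : M →ₗ[R] A, g ∘ₗ p.subtype = f := by
  obtain ⟨s, hs⟩ := p.mkQ.exists_rightInverse_of_surjective p.range_mkQ
  have mem_p (x : M) : x - s (p.mkQ x) ∈ p := by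
    rw [← Submodule.Quotient.mk_eq_zero, ← p.mkQ_apply, map_sub, ← LinearMap.comp_apply, hs,
      LinearMap.id_apply, sub_self]
  refine ⟨f ∘ₗ (LinearMap.id - s ∘ₗ p.mkQ).codRestrict p mem_p,
    LinearMap.ext fun x => congrArg f (Subtype.ext ?_)⟩
  simp [(Submodule.Quotient.mk_eq_zero p).2 x.2]

theorem LinearMap.exists_comp_eq_of_ker_le (D : N →ₗ[R] M) (F : N →ₗ[R] A)
    [Module.Projective R (M ⧸ LinearMap.range D)] (hDF : LinearMap.ker D ≤ LinearMap.ker F) :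
    ∃ G : M →ₗ[R] A, G ∘ₗ D = F := by
  obtain ⟨G, hG⟩ := (LinearMap.range D).exists_comp_subtype_eq_of_projective_quotient
    ((LinearMap.ker D).liftQ F hDF ∘ₗ D.quotKerEquivRange.symm.toLinearMap)
  refine ⟨G, LinearMap.ext fun y => ?_⟩
  have := LinearMap.congr_fun hG ⟨D y, LinearMap.mem_range_self D y⟩
  simpa [LinearMap.quotKerEquivRange_symm_apply_image] using this

end ProjectiveQuotient

section BarComplex

variable {S : Type} [Group S]

@[simp]
theorem barD2_single (g h : S) : barD2 S (Finsupp.single (g, h) 1) =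
    Finsupp.single h 1 - Finsupp.single (g * h) 1 + Finsupp.single g 1 := by
  simp [barD2]

@[simp]
theorem barD3_single (g h k : S) : barD3 S (Finsupp.single (g, h, k) 1) =
    Finsupp.single (h, k) 1 - Finsupp.single (g * h, k) 1
      + Finsupp.single (g, h * k) 1 - Finsupp.single (g, h) 1 := by
  simp [barD3]

theorem ker_barD2_le_range_barD3 (h2 : Subsingleton (H2Z S)) :
    (barD2 S).ker ≤ (barD3 S).range := by
  intro x hx
  have : (QuotientAddGroup.mk ⟨x, hx⟩ : H2Z S) = 0 := h2.elim _ _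
  simpa [QuotientAddGroup.eq_zero_iff, AddSubgroup.mem_addSubgroupOf] using this

end BarComplex

section Abelianization

variable {S : Type} [Group S]

open Finsupp

noncomputable abbrev barBoundaries₁ (S : Type) [Group S] : Submodule ℤ (S →₀ ℤ) :=
  LinearMap.range (barD2 S).toIntLinearMap

theorem barBoundaries₁.mkQ_single_mul (g h : S) :
    (barBoundaries₁ S).mkQ (single (g * h) 1) =
      (barBoundaries₁ S).mkQ (single g 1) + (barBoundaries₁ S).mkQ (single h 1) := by
  rw [← map_add, Submodule.mkQ_apply, Submodule.mkQ_apply, Submodule.Quotient.eq]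
  refine ⟨-single (g, h) 1, ?_⟩
  simp only [map_neg, AddMonoidHom.coe_toIntLinearMap, barD2_single]
  abel

noncomputable def barBoundaries₁.mkQSingleHom (S : Type) [Group S] :
    S →* Multiplicative ((S →₀ ℤ) ⧸ barBoundaries₁ S) :=
  MonoidHom.mk' (fun g => .ofAdd ((barBoundaries₁ S).mkQ (single g 1))) fun g h =>
    congrArg Multiplicative.ofAdd (barBoundaries₁.mkQ_single_mul g h)

noncomputable def toAbelianization (S : Type) [Group S] :
    (S →₀ ℤ) →ₗ[ℤ] Additive (Abelianization S) :=
  linearCombination ℤ fun g => .ofMul (Abelianization.of g)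

theorem toAbelianization_comp_barD2 :
    toAbelianization S ∘ₗ (barD2 S).toIntLinearMap = 0 := by
  ext ⟨g, h⟩
  simp [toAbelianization]

theorem barBoundaries₁_le_ker_toAbelianization :
    barBoundaries₁ S ≤ LinearMap.ker (toAbelianization S) :=
  LinearMap.range_le_ker_iff.2 toAbelianization_comp_barD2

instance [Module.Free ℤ (Additive (Abelianization S))] :
    Module.Projective ℤ ((S →₀ ℤ) ⧸ barBoundaries₁ S) := by
  refine .of_split ((barBoundaries₁ S).liftQ _ barBoundaries₁_le_ker_toAbelianization)
    (MonoidHom.toAdditiveLeft (Abelianization.lift (barBoundaries₁.mkQSingleHom S))).toIntLinearMap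
    ?_
  refine Submodule.linearMap_qext _ (lhom_ext' fun g => LinearMap.ext_ring ?_)
  simp only [LinearMap.comp_apply, lsingle_apply, Submodule.mkQ_apply,
    Submodule.liftQ_apply, LinearMap.id_apply]
  rw [toAbelianization, linearCombination_single, one_smul]
  exact Abelianization.lift_apply_of (barBoundaries₁.mkQSingleHom S) g

end Abelianization

section TrivialCocycles

variable {S : Type} [Group S] {A : Type} [AddCommGroup A]

theorem linearCombination_comp_barD3_eq_zero {f : S × S → A}
    (hf : ∀ g h k : S, f (h, k) - f (g * h, k) + f (g, h * k) - f (g, h) = 0) :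
    Finsupp.linearCombination ℤ f ∘ₗ (barD3 S).toIntLinearMap = 0 := by
  ext ⟨g, h, k⟩
  simpa using hf g h k

theorem exists_coboundary_eq_of_cocycle (h2 : Subsingleton (H2Z S))
    [Module.Free ℤ (Additive (Abelianization S))] {f : S × S → A}
    (hf : ∀ g h k : S, f (h, k) - f (g * h, k) + f (g, h * k) - f (g, h) = 0) :
    ∃ x : S → A, ∀ g h : S, x h - x (g * h) + x g = f (g, h) := by
  have hker : LinearMap.ker (barD2 S).toIntLinearMap ≤
      LinearMap.ker (Finsupp.linearCombination ℤ f) := fun y hy => by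
    obtain ⟨z, rfl⟩ := ker_barD2_le_range_barD3 h2 hy
    exact LinearMap.congr_fun (linearCombination_comp_barD3_eq_zero hf) z
  obtain ⟨G, hG⟩ := LinearMap.exists_comp_eq_of_ker_le _ _ hker
  refine ⟨fun g => G (Finsupp.single g 1), fun g h => ?_⟩
  simpa using LinearMap.congr_fun hG (Finsupp.single (g, h) 1)

end TrivialCocycles

/-- If `S` is a group whose second integral homology `H₂(S; ℤ)` (with trivial
coefficients) vanishes and whose abelianization is a free abelian group (a free
`ℤ`-module), then for every abelian group `A`, viewed as a trivial `S`-module,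
the second group cohomology `H²(S; A)` vanishes. -/
theorem stmt_1 (S : Type) [Group S]
    (h2 : Subsingleton (H2Z S))
    (hfree : Module.Free ℤ (Additive (Abelianization S)))
    (A : Type) [AddCommGroup A] :
    Subsingleton (groupCohomology (Rep.trivial ℤ S A) 2) := by
  refine subsingleton_of_forall_eq 0 fun c => ?_
  induction c using groupCohomology.H2_induction_on with
  | h f =>
  have hf : ∀ g h k : S, f (h, k) - f (g * h, k) + f (g, h * k) - f (g, h) = 0 := by
    simpa using (groupCohomology.mem_cocycles₂_def f.1).1 f.2
  obtain ⟨x, hx⟩ := exists_coboundary_eq_of_cocycle h2 hf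
  rw [groupCohomology.H2π_eq_zero_iff]
  exact ⟨x, funext fun ⟨g, h⟩ => by simpa using hx g h⟩
end

section
/- For every natural number n there is an injective group homomorphism from the direct product ℤ × F_n, where F_n is the free group of rank n, into GL₂(ℤ[t, t⁻¹]), the group of invertible 2×2 matrices over the ring of Laurent polynomials in one variable over ℤ. -/
/-!
The conjugates `conjShear c` of the shear `!![1, 6; 0, 1]` by `!![1, 0; c, 1]`, `c ∈ ℤ`, are a free
basis of the subgroup of `SL(2, ℤ)` they generate, by ping-pong on the nonzero vectors of `ℤ²`. In
the coordinates `(x, u) = (v 0, v 1 - c * v 0)` the matrix `conjShear c` is the shear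
`(x, u) ↦ (x + 6u, u)`, so it pushes every vector outside the cone `3|u| ≤ |x|`, `x u ≤ 0` into the
cone `3|u| ≤ |x|`, `x u > 0`, and its inverse does the opposite; these cones have slopes within
`1/3` of `c`, so cones belonging to distinct integers are disjoint. Adding the central matrix
`T • 1` for the `ℤ` factor keeps the map injective, because the determinant `T ^ (2k)` of
`(T • 1) ^ k * g` detects `k` for every `g` in the image of `SL(2, ℤ)`.
-/

open Matrix LaurentPolynomial Pointwise MatrixGroups
open scoped Function

def nonzeroVectors (G V : Type*) [Group G] [AddMonoid V] [DistribMulAction G V] :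
    SubMulAction G V where
  carrier := {v | v ≠ 0}
  smul_mem' g _ hv := (smul_ne_zero_iff_ne g).mpr hv

lemma pingPong_add_six_mul {x u : ℤ} (hxu : x ≠ 0 ∨ u ≠ 0)
    (h : ¬(x ≠ 0 ∧ 3 * |u| ≤ |x| ∧ x * u ≤ 0)) :
    x + 6 * u ≠ 0 ∧ 3 * |u| ≤ |x + 6 * u| ∧ 0 < (x + 6 * u) * u := by
  simp only [mul_pos_iff, mul_nonpos_iff, abs_eq_max_neg] at h ⊢
  omega

lemma pingPong_sub_six_mul {x u : ℤ} (hxu : x ≠ 0 ∨ u ≠ 0)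
    (h : ¬(x ≠ 0 ∧ 3 * |u| ≤ |x| ∧ 0 < x * u)) :
    x - 6 * u ≠ 0 ∧ 3 * |u| ≤ |x - 6 * u| ∧ (x - 6 * u) * u ≤ 0 := by
  simp only [mul_pos_iff, mul_nonpos_iff, abs_eq_max_neg] at h ⊢
  omega

def conjShear (c : ℤ) : SL(2, ℤ) :=
  ⟨!![1 - 6 * c, 6; -6 * c ^ 2, 1 + 6 * c], by rw [det_fin_two_of]; ring⟩

def shearCoord (c : ℤ) (v : Fin 2 → ℤ) : ℤ := v 1 - c * v 0

section ShearAction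

variable (c : ℤ) (v : Fin 2 → ℤ)

lemma conjShear_smul_zero : (conjShear c • v) 0 = v 0 + 6 * shearCoord c v := by
  rw [Matrix.SpecialLinearGroup.smul_def, smul_eq_mulVec]
  simp only [conjShear, shearCoord, mulVec, dotProduct, Fin.sum_univ_two, of_apply, cons_val_zero,
    cons_val_one, cons_val_fin_one]
  ring

lemma shearCoord_conjShear_smul : shearCoord c (conjShear c • v) = shearCoord c v := by
  rw [Matrix.SpecialLinearGroup.smul_def, smul_eq_mulVec]
  simp only [conjShear, shearCoord, mulVec, dotProduct, Fin.sum_univ_two, of_apply, cons_val_zero,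
    cons_val_one, cons_val_fin_one]
  ring

lemma conjShear_inv_smul_zero : ((conjShear c)⁻¹ • v) 0 = v 0 - 6 * shearCoord c v := by
  rw [Matrix.SpecialLinearGroup.smul_def, smul_eq_mulVec, Matrix.SpecialLinearGroup.coe_inv]
  simp only [conjShear, shearCoord, adjugate_fin_two_of, mulVec, dotProduct, Fin.sum_univ_two,
    of_apply, cons_val_zero, cons_val_one, cons_val_fin_one]
  ring

lemma shearCoord_conjShear_inv_smul : shearCoord c ((conjShear c)⁻¹ • v) = shearCoord c v := by
  rw [Matrix.SpecialLinearGroup.smul_def, smul_eq_mulVec, Matrix.SpecialLinearGroup.coe_inv]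
  simp only [conjShear, shearCoord, adjugate_fin_two_of, mulVec, dotProduct, Fin.sum_univ_two,
    of_apply, cons_val_zero, cons_val_one, cons_val_fin_one]
  ring

variable {v} in
lemma ne_zero_or_shearCoord_ne_zero (hv : v ≠ 0) : v 0 ≠ 0 ∨ shearCoord c v ≠ 0 := by
  contrapose! hv
  obtain ⟨h0, h1⟩ := hv
  ext i
  fin_cases i <;> simp_all [shearCoord]

end ShearAction

def shearCone (c : ℤ) : Set (Fin 2 → ℤ) := {v | v 0 ≠ 0 ∧ 3 * |shearCoord c v| ≤ |v 0|}

lemma disjoint_shearCone {c d : ℤ} (h : c ≠ d) : Disjoint (shearCone c) (shearCone d) := by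
  rw [Set.disjoint_left]
  rintro v ⟨hx, hc⟩ ⟨-, hd⟩
  have hdiff : shearCoord c v - shearCoord d v = (d - c) * v 0 := by
    simp only [shearCoord]
    ring
  have hfar : |v 0| ≤ |shearCoord c v - shearCoord d v| := by
    rw [hdiff, abs_mul]
    exact le_mul_of_one_le_left (abs_nonneg _) (Int.one_le_abs (sub_ne_zero.mpr h.symm))
  have hnear := abs_sub (shearCoord c v) (shearCoord d v)
  have hx_pos := abs_pos.mpr hx
  omega

abbrev PuncturedPlane := nonzeroVectors SL(2, ℤ) (Fin 2 → ℤ)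

def attractingSet (c : ℤ) : Set PuncturedPlane :=
  {v | (v : Fin 2 → ℤ) ∈ shearCone c ∧ 0 < v.1 0 * shearCoord c v}

def repellingSet (c : ℤ) : Set PuncturedPlane :=
  {v | (v : Fin 2 → ℤ) ∈ shearCone c ∧ v.1 0 * shearCoord c v ≤ 0}

lemma attractingSet_nonempty (c : ℤ) : (attractingSet c).Nonempty := by
  have hu : shearCoord c ![3, 3 * c + 1] = 1 := by
    simp only [shearCoord, cons_val_zero, cons_val_one, cons_val_fin_one]
    ring
  refine ⟨⟨![3, 3 * c + 1], fun h => by simpa using congrFun h 0⟩, ?_⟩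
  simp [attractingSet, shearCone, hu]

lemma pairwise_disjoint_attractingSet : Pairwise (Disjoint on attractingSet) := fun _ _ h =>
  ((disjoint_shearCone h).preimage Subtype.val).mono (fun _ hv => hv.1) (fun _ hv => hv.1)

lemma pairwise_disjoint_repellingSet : Pairwise (Disjoint on repellingSet) := fun _ _ h =>
  ((disjoint_shearCone h).preimage Subtype.val).mono (fun _ hv => hv.1) (fun _ hv => hv.1)

lemma disjoint_attractingSet_repellingSet (c d : ℤ) :
    Disjoint (attractingSet c) (repellingSet d) := by
  obtain rfl | h := eq_or_ne c d
  · exact Set.disjoint_left.mpr fun _ hc hd => hc.2.not_ge hd.2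
  · exact ((disjoint_shearCone h).preimage Subtype.val).mono (fun _ hv => hv.1) (fun _ hv => hv.1)

lemma conjShear_smul_compl_repellingSet (c : ℤ) :
    conjShear c • (repellingSet c)ᶜ ⊆ attractingSet c := by
  rintro _ ⟨v, hv, rfl⟩
  have := pingPong_add_six_mul (ne_zero_or_shearCoord_ne_zero c v.2)
    (by simpa [repellingSet, shearCone, and_assoc] using hv)
  simpa [attractingSet, shearCone, conjShear_smul_zero, shearCoord_conjShear_smul, and_assoc]

lemma conjShear_inv_smul_compl_attractingSet (c : ℤ) :
    (conjShear c)⁻¹ • (attractingSet c)ᶜ ⊆ repellingSet c := by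
  rintro _ ⟨v, hv, rfl⟩
  have := pingPong_sub_six_mul (ne_zero_or_shearCoord_ne_zero c v.2)
    (by simpa [attractingSet, shearCone, and_assoc] using hv)
  simpa [repellingSet, shearCone, conjShear_inv_smul_zero, shearCoord_conjShear_inv_smul,
    and_assoc]

theorem injective_lift_conjShear : Function.Injective (FreeGroup.lift conjShear) :=
  FreeGroup.injective_lift_of_ping_pong conjShear attractingSet repellingSet
    attractingSet_nonempty pairwise_disjoint_attractingSet pairwise_disjoint_repellingSet
    disjoint_attractingSet_repellingSet
    conjShear_smul_compl_repellingSet conjShear_inv_smul_compl_attractingSet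

section ScalarExtension

variable {n R H : Type*} [Fintype n] [DecidableEq n] [CommRing R] [Group H]

def scalarPowMul (u : Rˣ) (φ : H →* GL n R) : Multiplicative ℤ × H →* GL n R :=
  (zpowersHom _ (GeneralLinearGroup.scalar n u)).noncommCoprod φ fun _ _ =>
    Commute.zpow_left (GeneralLinearGroup.scalar_commute u _) _

lemma scalarPowMul_apply (u : Rˣ) (φ : H →* GL n R) (k : Multiplicative ℤ) (h : H) :
    scalarPowMul u φ (k, h) = GeneralLinearGroup.scalar n u ^ k.toAdd * φ h :=
  rfl

theorem scalarPowMul_injective [Nonempty n] {u : Rˣ} (hu : ¬IsOfFinOrder u) {φ : H →* GL n R}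
    (hφ : Function.Injective φ) (hdet : ∀ h, GeneralLinearGroup.det (φ h) = 1) :
    Function.Injective (scalarPowMul u φ) := by
  rw [injective_iff_map_eq_one]
  rintro ⟨k, h⟩ hkh
  rw [scalarPowMul_apply] at hkh
  have hk : k.toAdd = 0 := by
    have hu_pow : ¬IsOfFinOrder (u ^ Fintype.card n) :=
      fun hfin => hu (hfin.of_pow Fintype.card_ne_zero)
    have hdet_k := congrArg GeneralLinearGroup.det hkh
    rw [map_mul, map_zpow, hdet, GeneralLinearGroup.det_scalar, mul_one, map_one] at hdet_k
    exact injective_zpow_iff_not_isOfFinOrder.mpr hu_pow (hdet_k.trans (zpow_zero _).symm)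
  rw [hk, zpow_zero, one_mul, ← map_one φ] at hkh
  rw [hφ hkh, Prod.mk_eq_one]
  exact ⟨hk, rfl⟩

end ScalarExtension

lemma not_isOfFinOrder_T {R : Type*} [CommRing R] [Nontrivial R] :
    ¬IsOfFinOrder (isUnit_T 1 : IsUnit (T 1 : R[T;T⁻¹])).unit := by
  rw [isOfFinOrder_iff_pow_eq_one]
  rintro ⟨k, hk, hpow⟩
  have hTk : (T k : R[T;T⁻¹]) = T 0 := by
    simpa [T_pow, T_zero] using congrArg Units.val hpow
  have hcoeff := congrArg (·.coeff k) hTk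
  simp only [T_apply, if_pos, if_neg (Int.natCast_ne_zero.mpr hk.ne').symm] at hcoeff
  exact one_ne_zero hcoeff

/-- For every `n`, the direct product `ℤ × F_n` of the infinite cyclic group with the
free group of rank `n` embeds into `GL₂(ℤ[t,t⁻¹])`, the group of invertible `2 × 2`
matrices over the ring of Laurent polynomials in one variable over `ℤ`. -/
theorem stmt_2 (n : ℕ) :
    ∃ f : (Multiplicative ℤ × FreeGroup (Fin n)) →* GL (Fin 2) (LaurentPolynomial ℤ),
      Function.Injective f := by
  let ι : Fin n → ℤ := fun i => i
  have hι : Function.Injective ι := Nat.cast_injective.comp Fin.val_injective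
  let φ : FreeGroup (Fin n) →* GL (Fin 2) (LaurentPolynomial ℤ) :=
    (Matrix.SpecialLinearGroup.mapGL _).comp ((FreeGroup.lift conjShear).comp (FreeGroup.map ι))
  have hφ : Function.Injective φ :=
    Matrix.SpecialLinearGroup.mapGL_injective.comp
      (injective_lift_conjShear.comp (FreeGroup.map_injective hι))
  exact ⟨scalarPowMul (isUnit_T 1).unit φ, scalarPowMul_injective not_isOfFinOrder_T hφ
    fun _ => Matrix.SpecialLinearGroup.det_mapGL _⟩
end

section
/- The direct sum ⊕_{i ≥ 2} ℤ/iℤ (over all integers i ≥ 2) of cyclic groups of order i is not linear: for every field K and every natural number n there is no injective group homomorphism from ⊕_{i ≥ 2} ℤ/iℤ into GL_n(K). -/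
/-!
In characteristic `p`, an element of `p`-power order in `GL_n(K)` is unipotent, so its order
divides `p ^ n`; hence in characteristic `2` the element `1` of `ℤ/2^(n+1)ℤ` cannot embed.
Otherwise `2` is invertible and commuting involutions generate a finite-dimensional commutative
algebra `A`. Since `A` is artinian its spectrum is finite, so `A` has finitely many idempotents,
and `a ↦ (1 + a) / 2` maps involutions injectively to idempotents. But the direct sum contains
infinitely many involutions.
-/

open Polynomial Multiplicative

theorem Matrix.pow_card_eq_zero_of_isNilpotent {ι R : Type*} [Fintype ι] [DecidableEq ι]
    [CommRing R] [IsDomain R] {N : Matrix ι ι R} (hN : IsNilpotent N) :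
    N ^ Fintype.card ι = 0 := by
  have hchar : N.charpoly = X ^ Fintype.card ι :=
    sub_eq_zero.mp (Matrix.isNilpotent_charpoly_sub_pow_of_isNilpotent hN).eq_zero
  simpa [hchar] using N.aeval_self_charpoly

theorem Matrix.pow_char_pow_card_eq_one {ι K : Type*} [Fintype ι] [DecidableEq ι] [Field K]
    (p : ℕ) [Fact p.Prime] [CharP K p] {M : Matrix ι ι K} {k : ℕ} (hM : M ^ p ^ k = 1) :
    M ^ p ^ Fintype.card ι = 1 := by
  cases isEmpty_or_nonempty ι
  · exact Subsingleton.elim _ _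
  have hnil : IsNilpotent (M - 1) :=
    ⟨p ^ k, by rw [sub_pow_char_pow_of_commute p k (Commute.one_right M), hM, one_pow, sub_self]⟩
  have hle : Fintype.card ι ≤ p ^ Fintype.card ι :=
    (Nat.lt_pow_self (Fact.out : p.Prime).one_lt).le
  rw [← sub_eq_zero, ← one_pow (p ^ Fintype.card ι),
    ← sub_pow_char_pow_of_commute p _ (Commute.one_right M)]
  exact pow_eq_zero_of_le hle (Matrix.pow_card_eq_zero_of_isNilpotent hnil)

theorem Matrix.GeneralLinearGroup.pow_char_pow_card_eq_one {ι K : Type*} [Fintype ι]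
    [DecidableEq ι] [Field K] (p : ℕ) [Fact p.Prime] [CharP K p] {g : GL ι K} {k : ℕ}
    (hg : g ^ p ^ k = 1) : g ^ p ^ Fintype.card ι = 1 := by
  ext1
  rw [Units.val_pow_eq_pow_val, Units.val_one]
  exact Matrix.pow_char_pow_card_eq_one p (by rw [← Units.val_pow_eq_pow_val, hg, Units.val_one])

theorem finite_setOf_mul_self_eq_one {A : Type*} [CommRing A] [Finite (PrimeSpectrum A)]
    (h2 : IsUnit (2 : A)) : {a : A | a * a = 1}.Finite := by
  have : Finite (TopologicalSpace.Clopens (PrimeSpectrum A)) :=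
    Finite.of_injective _ SetLike.coe_injective
  have hidem : {e : A | IsIdempotentElem e}.Finite :=
    Finite.of_equiv _ PrimeSpectrum.isIdempotentElemEquivClopens.toEquiv.symm
  obtain ⟨u, hu⟩ : ∃ u : A, u * 2 = 1 := ⟨_, h2.val_inv_mul⟩
  refine (hidem.image fun e => 2 * e - 1).subset fun a (ha : a * a = 1) => ?_
  refine ⟨u * (1 + a), ?_, ?_⟩
  · change _ * _ = _
    linear_combination u * (1 + a) * hu + u ^ 2 * ha
  · linear_combination (1 + a) * hu

open scoped IsMulCommutative in
theorem Set.finite_of_commute_of_mul_self_eq_one {K R : Type*} [Field K] [Ring R] [Algebra K R]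
    [FiniteDimensional K R] (h2 : (2 : K) ≠ 0) {S : Set R}
    (hcomm : ∀ a ∈ S, ∀ b ∈ S, Commute a b) (hS : ∀ a ∈ S, a * a = 1) : S.Finite := by
  have := Algebra.isMulCommutative_adjoin K hcomm
  have : IsArtinianRing (Algebra.adjoin K S) :=
    isArtinian_of_tower K isArtinian_of_fg_of_artinian'
  have h2A : IsUnit (2 : Algebra.adjoin K S) := by
    simpa only [map_ofNat] using (Ne.isUnit h2).map (algebraMap K (Algebra.adjoin K S))
  refine ((finite_setOf_mul_self_eq_one h2A).image Subtype.val).subset fun a ha => ?_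
  exact ⟨⟨a, Algebra.subset_adjoin ha⟩, Subtype.ext (hS a ha), rfl⟩

theorem DFinsupp.addOrderOf_single {ι : Type*} [DecidableEq ι] {β : ι → Type*}
    [∀ i, AddMonoid (β i)] (i : ι) (x : β i) : addOrderOf (single i x) = addOrderOf x :=
  addOrderOf_injective (singleAddHom β i) single_injective x

theorem infinite_setOf_add_self_eq_zero :
    {x : Π₀ i : {i : ℕ // 2 ≤ i}, ZMod i.1 | x + x = 0}.Infinite := by
  let half (j : ℕ) : Π₀ i : {i : ℕ // 2 ≤ i}, ZMod i.1 :=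
    DFinsupp.single ⟨2 * (j + 1), by omega⟩ ((j + 1 : ℕ) : ZMod (2 * (j + 1)))
  refine Set.infinite_of_injective_forall_mem (f := half) (fun j j' h => ?_) (fun j => ?_)
  · have hne : ((j + 1 : ℕ) : ZMod (2 * (j + 1))) ≠ 0 := by
      rw [Ne, ZMod.natCast_eq_zero_iff]
      exact fun h => by have := Nat.le_of_dvd (by omega) h; omega
    rcases (DFinsupp.single_eq_single_iff _ _ _ _).mp h with ⟨hidx, -⟩ | ⟨h0, -⟩
    · have := congrArg Subtype.val hidx
      simp only at this
      omega
    · exact absurd h0 hne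
  · change DFinsupp.single _ _ + DFinsupp.single _ _ = 0
    rw [← DFinsupp.single_add, ← Nat.cast_add, show j + 1 + (j + 1) = 2 * (j + 1) by ring,
      ZMod.natCast_self, DFinsupp.single_zero]

/-- The direct sum `⊕_{i ≥ 2} ℤ/iℤ` of the cyclic groups of all orders `i ≥ 2`
is not linear: for every field `K` and every `n`, there is no injective group
homomorphism from it into `GL n K`. -/
theorem stmt_6 (K : Type) [Field K] (n : ℕ) :
    ¬ ∃ f : Multiplicative (Π₀ i : {i : ℕ // 2 ≤ i}, ZMod i.1) →* GL (Fin n) K,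
      Function.Injective f := by
  rintro ⟨f, hf⟩
  by_cases h2 : (2 : K) = 0
  · have := CharTwo.of_one_ne_zero_of_two_eq_zero one_ne_zero h2
    set g := f (ofAdd (DFinsupp.single ⟨2 ^ (n + 1), Nat.le_self_pow (by omega) 2⟩ 1))
    have hg : orderOf g = 2 ^ (n + 1) := by
      rw [orderOf_injective f hf, orderOf_ofAdd_eq_addOrderOf, DFinsupp.addOrderOf_single,
        ZMod.addOrderOf_one]
    have hg_pow : g ^ 2 ^ n = 1 := by
      have := Matrix.GeneralLinearGroup.pow_char_pow_card_eq_one 2 (hg ▸ pow_orderOf_eq_one g)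
      rwa [Fintype.card_fin] at this
    have := orderOf_dvd_of_pow_eq_one hg_pow
    rw [hg, Nat.pow_dvd_pow_iff_le_right (by norm_num)] at this
    omega
  · let toMatrix (x : Π₀ i : {i : ℕ // 2 ≤ i}, ZMod i.1) : Matrix (Fin n) (Fin n) K :=
      f (ofAdd x)
    have hfin : (toMatrix '' {x | x + x = 0}).Finite := by
      refine Set.finite_of_commute_of_mul_self_eq_one h2 ?_ ?_
      · rintro _ ⟨x, -, rfl⟩ _ ⟨y, -, rfl⟩
        exact ((Commute.all (ofAdd x) (ofAdd y)).map f).units_val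
      · rintro _ ⟨x, hx, rfl⟩
        change ((f (ofAdd x) * f (ofAdd x) : GL (Fin n) K) : Matrix (Fin n) (Fin n) K) = 1
        rw [← map_mul, ← ofAdd_add, hx, ofAdd_zero, map_one, Units.val_one]
    exact infinite_setOf_add_self_eq_zero
      (hfin.of_finite_image (Units.val_injective.comp (hf.comp ofAdd.injective)).injOn)
end

section
/- In GL₂(ℚ[x]) (invertible 2×2 matrices over the polynomial ring ℚ[x]), let A_i = [[1, x^i],[0,1]] for each integer i ≥ 1 and let B = [[3,0],[0,1]]. Then the subgroup generated by B together with all the A_i is isomorphic to the presented group G₂ = ⟨a_i (i ≥ 1), b ∥ [a_i, a_j] = 1, b a_i b⁻¹ = a_i³ (i, j ≥ 1)⟩; equivalently, the canonical homomorphism from this presented group to GL₂(ℚ[x]) sending a_i ↦ A_i and b ↦ B is injective. -/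
/-! Since `b` normalises the abelian subgroup `A = ⟨aᵢ⟩` and `G₂ = ⟨A, b⟩`, every element of `G₂`
has the form `b⁻ᵏ w bˡ` with `w ∈ A`. Its image has determinant `3 ^ (l - k)`, so it is trivial
only if `k = l` and the image `[[1, p], [0, 1]]` of `w` is trivial. Writing `w = ∏ aᵢ ^ nᵢ`, we get
`p = ∑ nᵢ xⁱ`, so `p = 0` forces every `nᵢ = 0`. -/

open Polynomial

/-- The unipotent matrix `A_i = [[1, x^i], [0, 1]]` as an element of `GL₂(ℚ[x])`. -/
noncomputable def ButtonA (i : ℕ+) : GL (Fin 2) (Polynomial ℚ) where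
  val := !![1, X ^ (i : ℕ); 0, 1]
  inv := !![1, -X ^ (i : ℕ); 0, 1]
  val_inv := by
    rw [Matrix.mul_fin_two, Matrix.one_fin_two]
    congr 1 <;> ring
  inv_val := by
    rw [Matrix.mul_fin_two, Matrix.one_fin_two]
    congr 1 <;> ring

/-- The diagonal matrix `B = [[3, 0], [0, 1]]` as an element of `GL₂(ℚ[x])`. -/
noncomputable def ButtonB : GL (Fin 2) (Polynomial ℚ) where
  val := !![3, 0; 0, 1]
  inv := !![C (1 / 3 : ℚ), 0; 0, 1]
  val_inv := by
    have h : (3 : Polynomial ℚ) * C (1 / 3 : ℚ) = 1 := by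
      rw [show (3 : Polynomial ℚ) = C 3 by norm_cast, ← C_mul]; norm_num
    have h' : C (1 / 3 : ℚ) * (3 : Polynomial ℚ) = 1 := by rw [mul_comm]; exact h
    rw [Matrix.mul_fin_two, Matrix.one_fin_two]
    norm_num [h, h']
  inv_val := by
    have h : (3 : Polynomial ℚ) * C (1 / 3 : ℚ) = 1 := by
      rw [show (3 : Polynomial ℚ) = C 3 by norm_cast, ← C_mul]; norm_num
    have h' : C (1 / 3 : ℚ) * (3 : Polynomial ℚ) = 1 := by rw [mul_comm]; exact h
    rw [Matrix.mul_fin_two, Matrix.one_fin_two]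
    norm_num [h, h']

open scoped commutatorElement

/-- The relators of the presented group
`G₂ = ⟨a_i (i ≥ 1), b ∥ [a_i, a_j] = 1, b a_i b⁻¹ = a_i³⟩`:
generators are indexed by `Option ℕ+`, with `some i ↦ a_i` and `none ↦ b`. -/
def ButtonRels : Set (FreeGroup (Option ℕ+)) :=
  (⋃ (i : ℕ+) (j : ℕ+),
      {⁅FreeGroup.of (some i), FreeGroup.of (some j)⁆}) ∪
    ⋃ (i : ℕ+),
      {FreeGroup.of (none : Option ℕ+) * FreeGroup.of (some i) *
        (FreeGroup.of (none : Option ℕ+))⁻¹ * (FreeGroup.of (some i) ^ 3)⁻¹}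

/-- Button's group `G₂ = ⟨a_i (i ≥ 1), b ∥ [a_i, a_j] = 1, b a_i b⁻¹ = a_i³⟩`. -/
def ButtonG2 : Type := PresentedGroup ButtonRels

instance : Group ButtonG2 := by unfold ButtonG2; infer_instance

section NormalForm

variable {G : Type*} [Group G] {A : Subgroup G} {b : G}

theorem pow_mul_mul_inv_pow_mem (hbA : ∀ x ∈ A, b * x * b⁻¹ ∈ A) (n : ℕ) {x : G} (hx : x ∈ A) :
    b ^ n * x * (b ^ n)⁻¹ ∈ A := by
  induction n generalizing x with
  | zero => simpa using hx
  | succ n ih =>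
    convert ih (hbA x hx) using 1
    simp only [pow_succ]
    group

theorem exists_inv_pow_mul_mul_pow_eq (hbA : ∀ x ∈ A, b * x * b⁻¹ ∈ A)
    (hgen : Subgroup.closure (insert b (A : Set G)) = ⊤) (g : G) :
    ∃ k l : ℕ, ∃ w ∈ A, (b ^ k)⁻¹ * w * b ^ l = g := by
  have hg : g ∈ Subgroup.closure (insert b (A : Set G)) := hgen ▸ Subgroup.mem_top g
  induction hg using Subgroup.closure_induction with
  | mem g hg =>
    rcases hg with rfl | hg
    · exact ⟨0, 1, 1, A.one_mem, by group⟩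
    · exact ⟨0, 0, g, hg, by group⟩
  | one => exact ⟨0, 0, 1, A.one_mem, by group⟩
  | mul _ _ _ _ hx hy =>
    obtain ⟨k, l, w, hw, rfl⟩ := hx
    obtain ⟨k', l', w', hw', rfl⟩ := hy
    rcases le_total k' l with h | h
    · obtain ⟨m, rfl⟩ := Nat.exists_eq_add_of_le h
      refine ⟨k, m + l', w * (b ^ m * w' * (b ^ m)⁻¹),
        A.mul_mem hw (pow_mul_mul_inv_pow_mem hbA m hw'), ?_⟩
      simp only [pow_add]
      group
    · obtain ⟨m, rfl⟩ := Nat.exists_eq_add_of_le h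
      refine ⟨k + m, l', b ^ m * w * (b ^ m)⁻¹ * w',
        A.mul_mem (pow_mul_mul_inv_pow_mem hbA m hw) hw', ?_⟩
      simp only [pow_add]
      group
  | inv _ _ hx =>
    obtain ⟨k, l, w, hw, rfl⟩ := hx
    exact ⟨l, k, w⁻¹, A.inv_mem hw, by group⟩

theorem injective_of_closure_insert_eq_top {H : Type*} [Group H]
    (hbA : ∀ x ∈ A, b * x * b⁻¹ ∈ A) (hgen : Subgroup.closure (insert b (A : Set G)) = ⊤)
    (f : G →* H) (hA : ∀ w ∈ A, f w = 1 → w = 1)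
    (hb : ∀ k l : ℕ, ∀ w ∈ A, f b ^ k = f w * f b ^ l → k = l) :
    Function.Injective f := by
  refine (injective_iff_map_eq_one f).2 fun g hg => ?_
  obtain ⟨k, l, w, hw, rfl⟩ := exists_inv_pow_mul_mul_pow_eq hbA hgen g
  have hfw : f b ^ k = f w * f b ^ l := by
    rwa [map_mul, map_mul, map_inv, map_pow, map_pow, mul_assoc, inv_mul_eq_one] at hg
  obtain rfl := hb k l w hw hfw
  obtain rfl := hA w hw (by simpa using hfw)
  group

end NormalForm

theorem linearIndependent_int_X_pow_comp {R ι : Type*} [Ring R] [CharZero R] {e : ι → ℕ}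
    (he : Function.Injective e) : LinearIndependent ℤ fun i => (X : R[X]) ^ e i := by
  have := ((basisMonomials R).linearIndependent.restrict_scalars' ℤ).comp e he
  simpa [coe_basisMonomials, Function.comp_def, monomial_one_right_eq_X_pow] using this

open Matrix.GeneralLinearGroup

theorem buttonA_eq_upperRightHom (i : ℕ+) : ButtonA i = upperRightHom (X ^ (i : ℕ)) :=
  Units.ext rfl

theorem buttonB_mul_upperRightHom (p : ℚ[X]) :
    ButtonB * upperRightHom p = upperRightHom (3 * p) * ButtonB := by
  ext i j
  fin_cases i <;> fin_cases j <;> simp [ButtonB, Matrix.mul_apply, Fin.sum_univ_two]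

theorem buttonB_mul_buttonA_mul_inv (i : ℕ+) :
    ButtonB * ButtonA i * ButtonB⁻¹ = ButtonA i ^ 3 := by
  rw [mul_inv_eq_iff_eq_mul, buttonA_eq_upperRightHom, buttonB_mul_upperRightHom,
    ← AddChar.map_nsmul_eq_pow, nsmul_eq_mul, Nat.cast_ofNat]

namespace ButtonG2

noncomputable def toGL : PresentedGroup ButtonRels →* GL (Fin 2) ℚ[X] :=
  PresentedGroup.toGroup (f := fun o => o.elim ButtonB ButtonA) <| by
    rintro r (hr | hr)
    · obtain ⟨i, j, rfl⟩ : ∃ i j : ℕ+, r = ⁅FreeGroup.of (some i), FreeGroup.of (some j)⁆ := by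
        simpa [eq_comm] using hr
      simp only [map_commutatorElement, FreeGroup.lift_apply_of, Option.elim_some,
        commutatorElement_eq_one_iff_commute, buttonA_eq_upperRightHom]
      exact (Commute.all _ _).map (upperRightHom (R := ℚ[X])).toMonoidHom
    · obtain ⟨i, rfl⟩ : ∃ i : ℕ+, r = FreeGroup.of none * FreeGroup.of (some i) *
          (FreeGroup.of none)⁻¹ * (FreeGroup.of (some i) ^ 3)⁻¹ := by
        simpa [eq_comm] using hr
      simp only [map_mul, map_inv, map_pow, FreeGroup.lift_apply_of, Option.elim_some,
        Option.elim_none, buttonB_mul_buttonA_mul_inv, mul_inv_cancel]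

def a (i : ℕ+) : PresentedGroup ButtonRels := PresentedGroup.of (some i)

def b : PresentedGroup ButtonRels := PresentedGroup.of none

theorem toGL_a (i : ℕ+) : toGL (a i) = ButtonA i := PresentedGroup.toGroup.of _

theorem toGL_b : toGL b = ButtonB := PresentedGroup.toGroup.of _

theorem commute_a (i j : ℕ+) : Commute (a i) (a j) := by
  have h := PresentedGroup.one_of_mem (rels := ButtonRels)
    (Or.inl (Set.mem_iUnion.2 ⟨i, Set.mem_iUnion.2 ⟨j, rfl⟩⟩))
  rwa [map_commutatorElement, commutatorElement_eq_one_iff_commute] at h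

theorem b_mul_a_mul_inv (i : ℕ+) : b * a i * b⁻¹ = a i ^ 3 := by
  have h := PresentedGroup.one_of_mem (rels := ButtonRels) (Or.inr (Set.mem_iUnion_of_mem i rfl))
  rwa [map_mul, map_inv, map_mul, map_mul, map_pow, mul_inv_eq_one] at h

def A : Subgroup (PresentedGroup ButtonRels) := Subgroup.closure (Set.range a)

instance : IsMulCommutative A :=
  Subgroup.isMulCommutative_closure <| by
    rintro _ ⟨i, rfl⟩ _ ⟨j, rfl⟩
    exact commute_a i j

def aA (i : ℕ+) : A := ⟨a i, Subgroup.subset_closure ⟨i, rfl⟩⟩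

theorem closure_range_aA : Subgroup.closure (Set.range aA) = ⊤ := by
  have h : Set.range aA = ((↑) : A → PresentedGroup ButtonRels) ⁻¹' Set.range a := by
    ext ⟨x, hx⟩
    simp [aA, Subtype.ext_iff]
  rw [h]
  exact Subgroup.closure_closure_coe_preimage

theorem b_mul_mul_inv_mem_A {x : PresentedGroup ButtonRels} (hx : x ∈ A) : b * x * b⁻¹ ∈ A := by
  have hmap : A.map (MulAut.conj b).toMonoidHom ≤ A := by
    rw [A, MonoidHom.map_closure, Subgroup.closure_le]
    rintro _ ⟨_, ⟨i, rfl⟩, rfl⟩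
    simpa [b_mul_a_mul_inv] using
      pow_mem (Subgroup.subset_closure (Set.mem_range_self (f := a) i)) 3
  exact hmap ⟨x, hx, rfl⟩

theorem closure_insert_b_A :
    Subgroup.closure (insert b (A : Set (PresentedGroup ButtonRels))) = ⊤ := by
  refine eq_top_iff.2 <| (PresentedGroup.closure_range_of ButtonRels).ge.trans <|
    Subgroup.closure_mono ?_
  rintro _ ⟨_ | i, rfl⟩
  exacts [Or.inl rfl, Or.inr (aA i).2]

section

open scoped IsMulCommutative

theorem toGL_prod_zpow (v : ℕ+ →₀ ℤ) :
    toGL (v.prod fun i n => aA i ^ n : A) =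
      upperRightHom (Finsupp.linearCombination ℤ (fun i : ℕ+ => (X : ℚ[X]) ^ (i : ℕ)) v) := by
  induction v using Finsupp.induction_linear with
  | zero => simp
  | add v w hv hw =>
    rw [Finsupp.prod_add_index' (fun _ => zpow_zero _) (fun _ => zpow_add _), map_add,
      AddChar.map_add_eq_mul, Subgroup.coe_mul, map_mul, hv, hw]
  | single i n =>
    rw [Finsupp.prod_single_index (zpow_zero _), Finsupp.linearCombination_single,
      AddChar.map_zsmul_eq_zpow, Subgroup.coe_zpow, map_zpow, aA, toGL_a,
      buttonA_eq_upperRightHom]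

theorem eq_one_of_toGL_eq_one {w : PresentedGroup ButtonRels} (hw : w ∈ A) (h : toGL w = 1) :
    w = 1 := by
  obtain ⟨v, hv⟩ := Subgroup.exists_finsupp_of_mem_closure_range aA ⟨w, hw⟩
    (closure_range_aA ▸ Subgroup.mem_top _)
  have hv0 : v = 0 := by
    have hind := linearIndependent_int_X_pow_comp (R := ℚ) PNat.coe_injective
    refine linearIndependent_iff.1 hind v <| injective_upperRightHom ?_
    rw [← toGL_prod_zpow, ← hv, h, AddChar.map_zero_eq_one]
  simpa [hv0] using congrArg Subtype.val hv

end

theorem det_toGL_of_mem_A {w : PresentedGroup ButtonRels} (hw : w ∈ A) : det (toGL w) = 1 := by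
  suffices A ≤ (det.comp toGL).ker from this hw
  refine Subgroup.closure_le _ |>.2 ?_
  rintro _ ⟨i, rfl⟩
  ext
  simp [toGL_a, ButtonA, Matrix.det_fin_two_of]

theorem toGL_injective : Function.Injective toGL := by
  refine injective_of_closure_insert_eq_top (fun _ => b_mul_mul_inv_mem_A) closure_insert_b_A
    toGL (fun _ => eq_one_of_toGL_eq_one) fun k l w hw h => ?_
  have hdet : (3 : ℚ[X]) ^ k = 3 ^ l := by
    simpa [det_toGL_of_mem_A hw, toGL_b, ButtonB, Matrix.det_fin_two_of] using
      congrArg (fun g => (det g : ℚ[X])) h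
  exact Nat.pow_right_injective (Nat.le_succ 2) (by exact_mod_cast hdet)

end ButtonG2

/-- The canonical homomorphism from the presented group
`G₂ = ⟨a_i (i ≥ 1), b ∥ [a_i, a_j] = 1, b a_i b⁻¹ = a_i³⟩` to `GL₂(ℚ[x])` sending
`a_i` to `A_i = [[1, x^i], [0, 1]]` and `b` to `B = [[3, 0], [0, 1]]` is injective;
hence `G₂` is isomorphic to the subgroup of `GL₂(ℚ[x])` generated by `B` and the `A_i`. -/
theorem stmt_7 :
    ∃ f : ButtonG2 →* GL (Fin 2) (Polynomial ℚ),
      Function.Injective f ∧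
        (∀ i : ℕ+, f (PresentedGroup.of (some i)) = ButtonA i) ∧
        f (PresentedGroup.of none) = ButtonB :=
  ⟨ButtonG2.toGL, ButtonG2.toGL_injective, ButtonG2.toGL_a, ButtonG2.toGL_b⟩
end

section
/- The group (⊕_{i ∈ ℕ} ℤ/2ℤ) × ℤ, the direct product of a countably infinite direct sum of cyclic groups of order 2 with an infinite cyclic group, has no faithful finite-dimensional linear representation over any field of characteristic different from 2: for every field K with char K ≠ 2 and every natural number n there is no injective group homomorphism from (⊕_{i ∈ ℕ} ℤ/2ℤ) × ℤ into GL_n(K). -/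
open Module

/-- The sign character `ZMod 2 → K`. -/
def eps (K : Type) [Field K] (a : ZMod 2) : K := if a = 0 then 1 else -1

lemma zmod2_cases (a : ZMod 2) : a = 0 ∨ a = 1 := by revert a; decide

lemma eps_zero (K : Type) [Field K] : eps K 0 = 1 := rfl
lemma eps_one (K : Type) [Field K] : eps K 1 = -1 := rfl

lemma eps_add (K : Type) [Field K] (a b : ZMod 2) :
    eps K (a + b) = eps K a * eps K b := by
  rcases zmod2_cases a with ha | ha <;> rcases zmod2_cases b with hb | hb <;>
    subst ha <;> subst hb <;> simp [eps, show (1+1:ZMod 2)=0 from rfl]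

section aux
variable {K V : Type} [Field K] [AddCommGroup V] [Module K V]

/-- Simultaneous diagonalization of commuting involutions. -/
lemma simdiag (h2 : (2:K) ≠ 0) {m : ℕ} (T : Fin m → (Module.End K V)ˣ)
    (hcomm : ∀ i j, Commute ((T i : Module.End K V)) ((T j : Module.End K V)))
    (hinv : ∀ i v, (T i : Module.End K V) ((T i : Module.End K V) v) = v)
    (s : Finset (Fin m)) :
    (⨆ σ : Fin m → ZMod 2,
      ⨅ i ∈ s, LinearMap.ker ((T i : Module.End K V) - eps K (σ i) • 1)) = ⊤ := by
  induction s using Finset.induction_on with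
  | empty => simp
  | @insert a s ha ih =>
    rw [eq_top_iff, ← ih]
    apply iSup_le
    intro σ w hw
    simp only [Submodule.mem_iInf] at hw
    have hwk : ∀ i ∈ s, (T i : Module.End K V) w = eps K (σ i) • w := by
      intro i hi
      have := hw i hi
      rw [LinearMap.mem_ker, LinearMap.sub_apply, LinearMap.smul_apply,
        Module.End.one_apply, sub_eq_zero] at this
      exact this
    set A : Module.End K V := (T a : Module.End K V) with hA
    set wp : V := (2:K)⁻¹ • (w + A w) with hwp
    set wm : V := (2:K)⁻¹ • (w - A w) with hwm
    have hsplit : w = wp + wm := by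
      rw [hwp, hwm, ← smul_add]
      have : w + A w + (w - A w) = (2:K) • w := by
        rw [two_smul]; abel
      rw [this, smul_smul, inv_mul_cancel₀ h2, one_smul]
    have hmemp : wp ∈ ⨅ i ∈ insert a s,
        LinearMap.ker ((T i : Module.End K V) - eps K ((Function.update σ a 0) i) • 1) := by
      simp only [Submodule.mem_iInf, Finset.mem_insert]
      rintro i (rfl | hi)
      · rw [LinearMap.mem_ker, LinearMap.sub_apply, LinearMap.smul_apply,
          Module.End.one_apply, sub_eq_zero, Function.update_self, eps_zero, one_smul,
          hwp, map_smul, map_add, hinv, ← hA, add_comm]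
      · have hne : i ≠ a := fun h => ha (h ▸ hi)
        rw [LinearMap.mem_ker, LinearMap.sub_apply, LinearMap.smul_apply,
          Module.End.one_apply, sub_eq_zero, Function.update_of_ne hne,
          hwp, map_smul, map_add]
        have h1 : (T i : Module.End K V) (A w) = eps K (σ i) • A w := by
          have := congrArg (fun (f : Module.End K V) => f w) (hcomm i a)
          simp only [Module.End.mul_apply] at this
          rw [this, hwk i hi, map_smul]
        rw [hwk i hi, h1, ← smul_add, smul_comm]
    have hmemm : wm ∈ ⨅ i ∈ insert a s,
        LinearMap.ker ((T i : Module.End K V) - eps K ((Function.update σ a 1) i) • 1) := by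
      simp only [Submodule.mem_iInf, Finset.mem_insert]
      rintro i (rfl | hi)
      · rw [LinearMap.mem_ker, LinearMap.sub_apply, LinearMap.smul_apply,
          Module.End.one_apply, sub_eq_zero, Function.update_self, eps_one,
          hwm, map_smul, map_sub, hinv, ← hA, neg_smul, one_smul, ← smul_neg, neg_sub]
      · have hne : i ≠ a := fun h => ha (h ▸ hi)
        rw [LinearMap.mem_ker, LinearMap.sub_apply, LinearMap.smul_apply,
          Module.End.one_apply, sub_eq_zero, Function.update_of_ne hne,
          hwm, map_smul, map_sub]
        have h1 : (T i : Module.End K V) (A w) = eps K (σ i) • A w := by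
          have := congrArg (fun (f : Module.End K V) => f w) (hcomm i a)
          simp only [Module.End.mul_apply] at this
          rw [this, hwk i hi, map_smul]
        rw [hwk i hi, h1, ← smul_sub, smul_comm]
    rw [hsplit]
    exact Submodule.add_mem _
      (Submodule.mem_iSup_of_mem (Function.update σ a 0) hmemp)
      (Submodule.mem_iSup_of_mem (Function.update σ a 1) hmemm)

lemma finrank_biSup_le [FiniteDimensional K V] {ι : Type} [DecidableEq ι] (t : Finset ι)
    (W : ι → Submodule K V) :
    finrank K ↥(⨆ i ∈ t, W i) ≤ ∑ i ∈ t, finrank K ↥(W i) := by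
  induction t using Finset.induction_on with
  | empty => simp
  | @insert a s ha ih =>
    rw [Finset.sum_insert ha]
    calc finrank K ↥(⨆ i ∈ insert a s, W i)
        = finrank K ↥(W a ⊔ ⨆ i ∈ s, W i) := by rw [Finset.iSup_insert]
      _ ≤ finrank K ↥(W a) + finrank K ↥(⨆ i ∈ s, W i) :=
          Submodule.finrank_add_le_finrank_add_finrank _ _
      _ ≤ _ := by omega


lemma linear_bound (h2 : (2:K) ≠ 0) [FiniteDimensional K V] {m : ℕ}
    (F : Multiplicative (Fin m → ZMod 2) →* (Module.End K V)ˣ)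
    (hF : Function.Injective F) : m ≤ finrank K V := by
  classical
  set T : Fin m → (Module.End K V)ˣ :=
    fun i => F (Multiplicative.ofAdd (Pi.single i 1)) with hT
  have hFadd : ∀ g h : Fin m → ZMod 2,
      F (Multiplicative.ofAdd (g + h))
        = F (Multiplicative.ofAdd g) * F (Multiplicative.ofAdd h) := by
    intro g h
    rw [← map_mul, ← ofAdd_add]
  have hinv : ∀ i v, (T i : Module.End K V) ((T i : Module.End K V) v) = v := by
    intro i v
    have : T i * T i = 1 := by
      have h0 : (Pi.single i 1 : Fin m → ZMod 2) + Pi.single i 1 = 0 := by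
        ext j
        by_cases h : j = i
        · subst h
          simp only [Pi.add_apply, Pi.single_eq_same, Pi.zero_apply]
          decide
        · simp [Pi.single_eq_of_ne h]
      calc T i * T i
          = F (Multiplicative.ofAdd ((Pi.single i 1 : Fin m → ZMod 2) + Pi.single i 1)) :=
            (hFadd _ _).symm
        _ = 1 := by rw [h0, ofAdd_zero, map_one]
    have := congrArg (fun u : (Module.End K V)ˣ => (u : Module.End K V) v) this
    simpa [Module.End.mul_apply] using this
  have hcomm : ∀ i j,
      Commute ((T i : Module.End K V)) ((T j : Module.End K V)) := by
    intro i j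
    have : T i * T j = T j * T i := by
      calc T i * T j
          = F (Multiplicative.ofAdd (Pi.single i (1:ZMod 2) + Pi.single j 1)) := (hFadd _ _).symm
        _ = F (Multiplicative.ofAdd (Pi.single j (1:ZMod 2) + Pi.single i 1)) := by rw [add_comm]
        _ = T j * T i := hFadd _ _
    exact congrArg Units.val this
  set W : (Fin m → ZMod 2) → Submodule K V :=
    fun σ => ⨅ i, LinearMap.ker ((T i : Module.End K V) - eps K (σ i) • 1) with hW
  have htop : (⨆ σ, W σ) = ⊤ := by
    rw [← simdiag h2 T hcomm hinv Finset.univ]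
    refine iSup_congr fun σ => ?_
    rw [hW]
    simp
  -- action of F on W σ
  have hact : ∀ (g σ : Fin m → ZMod 2), ∀ v ∈ W σ,
      (F (Multiplicative.ofAdd g) : Module.End K V) v
        = eps K (∑ i, g i * σ i) • v := by
    intro g σ v hv
    have hvk : ∀ i, (T i : Module.End K V) v = eps K (σ i) • v := by
      intro i
      have := (Submodule.mem_iInf _).mp hv i
      rwa [LinearMap.mem_ker, LinearMap.sub_apply, LinearMap.smul_apply,
        Module.End.one_apply, sub_eq_zero] at this
    have key : ∀ s : Finset (Fin m),
        (F (Multiplicative.ofAdd (∑ i ∈ s, Pi.single i (g i))) : Module.End K V) v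
          = eps K (∑ i ∈ s, g i * σ i) • v := by
      intro s
      induction s using Finset.induction_on with
      | empty => simp [eps]
      | @insert a s ha ih =>
        rw [Finset.sum_insert ha, Finset.sum_insert ha, hFadd]
        have haction : (F (Multiplicative.ofAdd (Pi.single a (g a))) : Module.End K V) v
            = eps K (g a * σ a) • v := by
          rcases zmod2_cases (g a) with h | h
          · rw [h, Pi.single_zero, ofAdd_zero, map_one]
            simp [eps]
          · rw [h, one_mul]
            exact hvk a
        have hsingle : (F (Multiplicative.ofAdd (Pi.single a (g a))) : Module.End K V)
            ((eps K (∑ i ∈ s, g i * σ i)) • v)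
              = eps K (g a * σ a + ∑ i ∈ s, g i * σ i) • v := by
          rw [map_smul, haction, smul_smul, eps_add, mul_comm]
        calc (F (Multiplicative.ofAdd (Pi.single a (g a)))
              * F (Multiplicative.ofAdd (∑ i ∈ s, Pi.single i (g i)))
                : Module.End K V) v
            = (F (Multiplicative.ofAdd (Pi.single a (g a))) : Module.End K V)
              ((F (Multiplicative.ofAdd (∑ i ∈ s, Pi.single i (g i)))
                : Module.End K V) v) := rfl
          _ = (F (Multiplicative.ofAdd (Pi.single a (g a))) : Module.End K V)
              ((eps K (∑ i ∈ s, g i * σ i)) • v) := by rw [ih]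
          _ = eps K (g a * σ a + ∑ i ∈ s, g i * σ i) • v := hsingle
    have := key Finset.univ
    rwa [Finset.univ_sum_single] at this
  -- the finset of sign patterns with nontrivial simultaneous eigenspace
  set S : Finset (Fin m → ZMod 2) := Finset.univ.filter (fun σ => W σ ≠ ⊥) with hS
  -- injectivity of the pairing
  have hinj : Function.Injective
      (fun (g : Fin m → ZMod 2) => fun (σ : {x // x ∈ S}) => ∑ i, g i * (σ : Fin m → ZMod 2) i) := by
    intro g g' hgg
    have hFeq : F (Multiplicative.ofAdd g) = F (Multiplicative.ofAdd g') := by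
      have hker : ∀ σ, W σ ≤ LinearMap.ker
          ((F (Multiplicative.ofAdd g) : Module.End K V)
            - (F (Multiplicative.ofAdd g') : Module.End K V)) := by
        intro σ
        by_cases hσ : W σ = ⊥
        · rw [hσ]; exact bot_le
        · intro v hv
          have hσS : σ ∈ S := by rw [hS]; simp [hσ]
          have h1 := hact g σ v hv
          have h2 := hact g' σ v hv
          have heq : (∑ i, g i * σ i) = ∑ i, g' i * σ i :=
            congrFun hgg ⟨σ, hσS⟩
          rw [LinearMap.mem_ker, LinearMap.sub_apply, h1, h2, heq, sub_self]
      have : (⊤ : Submodule K V) ≤ LinearMap.ker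
          ((F (Multiplicative.ofAdd g) : Module.End K V)
            - (F (Multiplicative.ofAdd g') : Module.End K V)) := by
        rw [← htop]; exact iSup_le hker
      have hker0 := top_le_iff.mp this
      have := LinearMap.ker_eq_top.mp hker0
      exact Units.ext (sub_eq_zero.mp this)
    have := hF hFeq
    exact Multiplicative.ofAdd.injective this
  -- counting
  have hcard1 : (2:ℕ) ^ m ≤ 2 ^ S.card := by
    have := Fintype.card_le_of_injective _ hinj
    rwa [Fintype.card_fun, Fintype.card_fun, Fintype.card_coe, ZMod.card,
      Fintype.card_fin] at this
  have hmS : m ≤ S.card := (Nat.pow_le_pow_iff_right (by norm_num)).mp hcard1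
  have hScard : S.card ≤ finrank K V := by
    have heps : ∀ a b : ZMod 2, eps K a = eps K b → a = b := by
      have hne : (1:K) ≠ -1 := fun h => h2 (by linear_combination h)
      intro a b hab
      rcases zmod2_cases a with ha | ha <;> rcases zmod2_cases b with hb | hb <;>
          subst ha <;> subst hb <;> first
        | rfl
        | (rw [eps_zero, eps_one] at hab; exact absurd hab hne)
        | (rw [eps_zero, eps_one] at hab; exact absurd hab.symm hne)
    set U : (Fin m → K) → Submodule K V :=
      fun χ => ⨅ i, ((T i : Module.End K V).maxGenEigenspace (χ i)) with hU
    have hUind : iSupIndep U :=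
      Module.End.independent_iInf_maxGenEigenspace_of_forall_mapsTo
        (fun i => (T i : Module.End K V))
        (fun i j φ => Module.End.mapsTo_maxGenEigenspace_of_comm (hcomm j i) φ)
    haveI : Fintype {χ : Fin m → K // U χ ≠ ⊥} := hUind.fintypeNeBotOfFiniteDimensional
    have hcard2 : Fintype.card {χ : Fin m → K // U χ ≠ ⊥} ≤ finrank K V :=
      hUind.subtype_ne_bot_le_finrank
    have hWle : ∀ σ : Fin m → ZMod 2, W σ ≤ U (fun i => eps K (σ i)) := by
      intro σ
      refine le_iInf fun i => ?_
      refine le_trans (iInf_le _ i) ?_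
      intro v hv
      rw [LinearMap.mem_ker] at hv
      rw [Module.End.mem_maxGenEigenspace]
      exact ⟨1, by rwa [pow_one]⟩
    have hΦ : Function.Injective (fun σ : {x // x ∈ S} =>
        (⟨fun i => eps K ((σ : Fin m → ZMod 2) i), by
          have hσ2 : W σ.val ≠ ⊥ := (Finset.mem_filter.mp σ.2).2
          intro hbot
          exact hσ2 (le_bot_iff.mp ((hWle σ.1).trans hbot.le))⟩ :
            {χ : Fin m → K // U χ ≠ ⊥})) := by
      intro σ σ' hσσ
      have := congrArg Subtype.val hσσ
      ext i
      exact heps _ _ (congrFun this i)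
    have := Fintype.card_le_of_injective _ hΦ
    rw [Fintype.card_coe] at this
    omega
  omega

end aux

/-- The group `(⊕_{i ∈ ℕ} ℤ/2ℤ) × ℤ` has no faithful finite-dimensional linear
representation over any field of characteristic different from `2`. -/
theorem stmt_8 (K : Type) [Field K] (hK : ringChar K ≠ 2) (n : ℕ) :
    ¬ ∃ f : Multiplicative ((Π₀ _ : ℕ, ZMod 2) × ℤ) →* GL (Fin n) K,
      Function.Injective f := by
  classical
  rintro ⟨f, hf⟩
  set j : (Fin (n+1) → ZMod 2) →+ (Π₀ _ : ℕ, ZMod 2) :=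
    ∑ i : Fin (n+1), (DFinsupp.singleAddHom (fun _ : ℕ => ZMod 2) (i : ℕ)).comp
      (Pi.evalAddMonoidHom (fun _ => ZMod 2) i) with hj
  have hjapply : ∀ (g : Fin (n+1) → ZMod 2) (a : Fin (n+1)), j g (a : ℕ) = g a := by
    intro g a
    rw [hj, AddMonoidHom.finset_sum_apply, DFinsupp.finset_sum_apply]
    rw [Finset.sum_eq_single a]
    · simp
    · intro i _ hi
      simp only [AddMonoidHom.coe_comp, Function.comp_apply, Pi.evalAddMonoidHom_apply,
        DFinsupp.singleAddHom_apply]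
      rw [DFinsupp.single_apply, dif_neg (fun h => hi (Fin.val_injective h))]
    · intro h
      exact absurd (Finset.mem_univ a) h
  have hjinj : Function.Injective j := by
    intro g g' h
    funext a
    rw [← hjapply g a, ← hjapply g' a, h]
  set p : (Fin (n+1) → ZMod 2) →+ ((Π₀ _ : ℕ, ZMod 2) × ℤ) := j.prod 0 with hp
  have hpinj : Function.Injective p := by
    intro g g' h
    exact hjinj (congrArg Prod.fst h)
  set q : Multiplicative (Fin (n+1) → ZMod 2) →* Multiplicative ((Π₀ _ : ℕ, ZMod 2) × ℤ) :=
    AddMonoidHom.toMultiplicative p with hq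
  have hqinj : Function.Injective q := fun a b hab => hpinj hab
  set E : GL (Fin n) K ≃* (Module.End K (Fin n → K))ˣ :=
    Units.mapEquiv (Matrix.toLinAlgEquiv' (R := K) (n := Fin n)).toRingEquiv.toMulEquiv with hE
  set F : Multiplicative (Fin (n+1) → ZMod 2) →* (Module.End K (Fin n → K))ˣ :=
    E.toMonoidHom.comp (f.comp q) with hF
  have hFinj : Function.Injective F := by
    intro a b hab
    exact hqinj (hf (E.injective hab))
  have hb := linear_bound (K := K) (V := Fin n → K) (Ring.two_ne_zero hK) F hFinj
  rw [Module.finrank_fin_fun] at hb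
  omega
end

section
/- The group (⊕_{i ∈ ℕ} (ℤ/2ℤ × ℤ/3ℤ)) × ℤ × ℤ is not linear over any field: for every field K and every natural number n there is no injective group homomorphism from (⊕_{i ∈ ℕ} (ℤ/2ℤ × ℤ/3ℤ)) × ℤ² into GL_n(K). -/
/-!
The characteristic of `K` is not both 2 and 3, so some `q ∈ {2, 3}` is invertible in `K`, and the
group contains `(ℤ/q)^(n+1)`. Over the algebraic closure, commuting endomorphisms `f` with
`f ^ q = 1` are semisimple (`X ^ q - 1` is separable), hence simultaneously diagonalisable: a
commutative group of exponent `q` inside `GL_n` is determined by its characters on the at most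
`n` joint eigenspaces, which take values among the at most `q` roots of unity of order `q`. So it
has at most `q ^ n` elements.
-/

open Module Module.End Function Polynomial

theorem Polynomial.card_nthRootsFinset_le {R : Type*} [CommRing R] [IsDomain R] (n : ℕ) (a : R) :
    (nthRootsFinset n a).card ≤ n := by
  classical
  rw [nthRootsFinset_def]
  exact (Multiset.toFinset_card_le _).trans (card_nthRoots n a)

section

variable {K V : Type*} [Field K] [AddCommGroup V] [Module K V]

theorem Module.End.isSemisimple_of_pow_eq_one_s10 {f : End K V} {q : ℕ} (hq : (q : K) ≠ 0)
    (hf : f ^ q = 1) : f.IsSemisimple :=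
  isSemisimple_of_squarefree_aeval_eq_zero (X_pow_sub_one_separable_iff.mpr hq).squarefree
    (by simp [hf])

theorem Module.End.HasEigenvalue.pow_eq_one {f : End K V} {μ : K} (h : f.HasEigenvalue μ)
    {q : ℕ} (hf : f ^ q = 1) : μ ^ q = 1 := by
  obtain ⟨v, hv⟩ := h.exists_hasEigenvector
  have hμv : (μ ^ q) • v = (1 : K) • v := by rw [← hv.pow_apply q, hf, one_apply, one_smul]
  exact smul_left_injective K hv.2 hμv

def jointGenEigenspace {ι : Type*} (f : ι → End K V) (χ : ι → K) : Submodule K V :=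
  ⨅ i, (f i).maxGenEigenspace (χ i)

theorem hasEigenvalue_of_jointGenEigenspace_ne_bot {ι : Type*} {f : ι → End K V} {χ : ι → K}
    (h : jointGenEigenspace f χ ≠ ⊥) (i : ι) : (f i).HasEigenvalue (χ i) :=
  (hasUnifEigenvalue_iff_hasUnifEigenvalue_one (by simp)).mp
    (ne_bot_of_le_ne_bot h (iInf_le _ i))

variable [IsAlgClosed K] [FiniteDimensional K V]

theorem iSup_jointGenEigenspace_eq_top {ι : Type*} {f : ι → End K V}
    (hf : Pairwise fun i j ↦ Commute (f i) (f j)) : ⨆ χ, jointGenEigenspace f χ = ⊤ :=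
  iSup_iInf_maxGenEigenspace_eq_top_of_iSup_maxGenEigenspace_eq_top_of_commute f hf
    fun i ↦ iSup_maxGenEigenspace_eq_top (f i)

theorem eq_of_forall_jointGenEigenspace_ne_bot {ι : Type*} {f : ι → End K V}
    (hf : Pairwise fun i j ↦ Commute (f i) (f j)) (hss : ∀ i, (f i).IsSemisimple) {i j : ι}
    (h : ∀ χ, jointGenEigenspace f χ ≠ ⊥ → χ i = χ j) : f i = f j := by
  suffices ⊤ ≤ LinearMap.eqLocus (f i) (f j) from
    LinearMap.ext fun x ↦ this Submodule.mem_top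
  rw [← iSup_jointGenEigenspace_eq_top hf]
  refine iSup_le fun χ ↦ ?_
  by_cases hχ : jointGenEigenspace f χ = ⊥
  · simp [hχ]
  intro x hx
  have apply_eq (k : ι) : f k x = χ k • x := by
    have hxk := (iInf_le _ k : jointGenEigenspace f χ ≤ _) hx
    rw [(hss k).isFinitelySemisimple.maxGenEigenspace_eq_eigenspace] at hxk
    exact mem_eigenspace_iff.mp hxk
  simp only [LinearMap.mem_eqLocus, apply_eq, h χ hχ]

theorem card_le_pow_finrank_of_injective {A : Type*} [CommMonoid A] {q : ℕ} (hq : (q : K) ≠ 0)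
    (hA : ∀ a : A, a ^ q = 1) {ρ : A →* End K V} (hρ : Injective ρ) :
    Nat.card A ≤ q ^ finrank K V := by
  classical
  have hq0 : 0 < q := Nat.pos_of_ne_zero (by rintro rfl; simp at hq)
  have hcomm : Pairwise fun a b ↦ Commute (ρ a) (ρ b) := fun a b _ ↦ (Commute.all a b).map ρ
  have hpow (a : A) : ρ a ^ q = 1 := by rw [← map_pow, hA, map_one]
  have hind : iSupIndep (jointGenEigenspace ρ) :=
    independent_iInf_maxGenEigenspace_of_forall_mapsTo _
      fun a b μ ↦ mapsTo_maxGenEigenspace_of_comm ((Commute.all b a).map ρ) μ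
  let S := {χ : A → K // jointGenEigenspace ρ χ ≠ ⊥}
  let _ : Fintype S := hind.fintypeNeBotOfFiniteDimensional
  let R := nthRootsFinset q (1 : K)
  let weights : A → S → R := fun a χ ↦ ⟨χ.1 a, (mem_nthRootsFinset hq0 1).mpr
    ((hasEigenvalue_of_jointGenEigenspace_ne_bot χ.2 a).pow_eq_one (hpow a))⟩
  have hweights : Injective weights := fun a b hab ↦ hρ <|
    eq_of_forall_jointGenEigenspace_ne_bot hcomm (fun a ↦ isSemisimple_of_pow_eq_one_s10 hq (hpow a))
      fun χ hχ ↦ congrArg Subtype.val (congrFun hab ⟨χ, hχ⟩)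
  calc Nat.card A ≤ Nat.card (S → R) := Nat.card_le_card_of_injective _ hweights
    _ = R.card ^ Fintype.card S := by simp
    _ ≤ q ^ Fintype.card S := Nat.pow_le_pow_left (card_nthRootsFinset_le q 1) _
    _ ≤ q ^ finrank K V := Nat.pow_le_pow_right hq0 hind.subtype_ne_bot_le_finrank

end

theorem card_le_pow_of_injective_generalLinearGroup {K : Type*} [Field K] {A : Type*}
    [CommMonoid A] {q n : ℕ} (hq : (q : K) ≠ 0) (hA : ∀ a : A, a ^ q = 1)
    {ρ : A →* GL (Fin n) K} (hρ : Injective ρ) : Nat.card A ≤ q ^ n := by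
  let L := AlgebraicClosure K
  let toEnd : GL (Fin n) K →* End L (Fin n → L) :=
    (Units.coeHom _).comp <| Matrix.GeneralLinearGroup.toLin.toMonoidHom.comp <|
      Matrix.GeneralLinearGroup.map (algebraMap K L)
  have htoEnd : Injective toEnd := fun a b hab ↦ Units.ext <|
    Matrix.map_injective (algebraMap K L).injective <| congrArg Units.val <|
      Matrix.GeneralLinearGroup.toLin.injective (Units.ext hab)
  have hqL : (q : L) ≠ 0 := by rwa [← map_natCast (algebraMap K L), _root_.map_ne_zero]
  simpa using card_le_pow_finrank_of_injective hqL hA (ρ := toEnd.comp ρ) (htoEnd.comp hρ)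

theorem le_of_injective_pi_zmod_generalLinearGroup {K : Type*} [Field K] {q m n : ℕ}
    (hq1 : 1 < q) (hq : (q : K) ≠ 0) {ρ : Multiplicative (Fin m → ZMod q) →* GL (Fin n) K}
    (hρ : Injective ρ) : m ≤ n := by
  have : NeZero q := ⟨by omega⟩
  have hA (a : Multiplicative (Fin m → ZMod q)) : a ^ q = 1 := by
    ext i
    simp
  have hcard : Nat.card (Multiplicative (Fin m → ZMod q)) = q ^ m := by
    simp [Nat.card_eq_fintype_card, ZMod.card]
  exact (Nat.pow_le_pow_iff_right hq1).mp
    (hcard ▸ card_le_pow_of_injective_generalLinearGroup hq hA hρ)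

theorem exists_addMonoidHom_pi_fin_dfinsupp_injective {M N : Type*} [AddCommMonoid M]
    [AddCommMonoid N] {e : M →+ N} (he : Injective e) (m : ℕ) :
    ∃ g : (Fin m → M) →+ Π₀ _ : ℕ, N, Injective g := by
  classical
  refine ⟨(DFinsupp.mapRange.addMonoidHom fun _ ↦ e).comp <|
    finsuppAddEquivDFinsupp.toAddMonoidHom.comp <| (Finsupp.mapDomain.addMonoidHom Fin.val).comp
      (Finsupp.linearEquivFunOnFinite ℕ M (Fin m)).symm.toLinearMap.toAddMonoidHom, ?_⟩
  exact ((DFinsupp.mapRange_injective (fun _ ↦ e) fun _ ↦ map_zero e).mpr fun _ ↦ he).comp <|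
    finsuppAddEquivDFinsupp.injective.comp <| (Finsupp.mapDomain_injective Fin.val_injective).comp
      (Finsupp.linearEquivFunOnFinite ℕ M (Fin m)).symm.injective

theorem two_ne_zero_or_three_ne_zero (R : Type*) [Ring R] [Nontrivial R] :
    (2 : R) ≠ 0 ∨ (3 : R) ≠ 0 := by
  by_contra! h
  have : (3 : R) - 2 = 1 := by norm_num
  simp [h.1, h.2] at this

/-- The group `(⊕_{i ∈ ℕ} (ℤ/2ℤ × ℤ/3ℤ)) × ℤ × ℤ` is not linear over any field:
for every field `K` and every `n`, there is no injective group homomorphism from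
it into `GL n K`. -/
theorem stmt_10 (K : Type) [Field K] (n : ℕ) :
    ¬ ∃ f : Multiplicative ((Π₀ _ : ℕ, ZMod 2 × ZMod 3) × ℤ × ℤ) →* GL (Fin n) K,
      Function.Injective f := by
  rintro ⟨f, hf⟩
  have no_embedding (q : ℕ) (hq1 : 1 < q) (hq : (q : K) ≠ 0) (e : ZMod q →+ ZMod 2 × ZMod 3)
      (he : Injective e) : False := by
    obtain ⟨g, hg⟩ := exists_addMonoidHom_pi_fin_dfinsupp_injective he (n + 1)
    have := le_of_injective_pi_zmod_generalLinearGroup hq1 hq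
      (ρ := f.comp ((AddMonoidHom.inl _ _).comp g).toMultiplicative)
      (hf.comp ((Prod.mk_left_injective 0).comp hg))
    omega
  rcases two_ne_zero_or_three_ne_zero K with h | h
  · exact no_embedding 2 one_lt_two (mod_cast h) (AddMonoidHom.inl _ _)
      (Prod.mk_left_injective 0)
  · exact no_embedding 3 (by norm_num) (mod_cast h) (AddMonoidHom.inr _ _)
      (Prod.mk_right_injective 0)
end

section
/- There is an injective group homomorphism from the direct product A × F, where A is a free abelian group of countably infinite rank (e.g. ⊕_{i ∈ ℕ} ℤ) and F is the free group on countably many generators, into GL₂(ℂ). -/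
/-!
The free abelian group embeds into the positive real scalars by `a ↦ exp (∑ aᵢ tⁱ)` for a
transcendental real `t`. The free group embeds into `SL₂(ℂ)` by ping-pong on the Riemann sphere:
`z ↦ z / (z + 1)` maps the complement of the closed disc `|z + 1| ≤ 1` into the open disc
`|z - 1| < 1`, and its conjugates by the translations `z ↦ z + 5k` are free generators because
the translated pairs of discs are pairwise disjoint. Scalars are central, so the two embeddings
combine to a homomorphism on `A × F`, whose kernel is trivial: the determinant is injective on
positive scalars and trivial on `SL₂(ℂ)`.
-/

open Function Metric Matrix Matrix.GeneralLinearGroup OnePoint Pointwise Polynomial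

theorem Set.inv_smul_compl_subset_of_smul_compl_subset {G α : Type*} [Group G] [MulAction G α]
    {g : G} {X Y : Set α} (h : g • Yᶜ ⊆ X) : g⁻¹ • Xᶜ ⊆ Y := by
  rwa [Set.smul_set_compl, Set.compl_subset_comm, ← Set.smul_set_subset_iff_subset_inv_smul_set]

section PingPong

universe u

-- `FreeGroup.injective_lift_of_ping_pong` needs `ι` and `G` in the same universe.
variable {ι G : Type u} {α : Type*} [Group G] [MulAction G α]

theorem FreeGroup.injective_lift_conj_of_ping_pong [Nontrivial ι] (t : ι → G) (b : G)
    {X Y : Set α} (hX : X.Nonempty) (hXY : Disjoint X Y)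
    (ht : Pairwise (Disjoint on fun i => t i • (X ∪ Y))) (hb : b • Yᶜ ⊆ X) :
    Injective (FreeGroup.lift fun i => t i * b * (t i)⁻¹) := by
  have hconj (i : ι) : (t i * b * (t i)⁻¹) • (t i • Y)ᶜ ⊆ t i • X := by
    rw [← Set.smul_set_compl, smul_smul, inv_mul_cancel_right, mul_smul]
    exact Set.smul_set_mono hb
  refine FreeGroup.injective_lift_of_ping_pong _ (fun i => t i • X) (fun i => t i • Y)
    (fun _ => hX.smul_set) (fun i j hij => ?_) (fun i j hij => ?_) (fun i j => ?_) hconj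
    (fun i => Set.inv_smul_compl_subset_of_smul_compl_subset (hconj i))
  · exact (ht hij).mono (Set.smul_set_mono Set.subset_union_left)
      (Set.smul_set_mono Set.subset_union_left)
  · exact (ht hij).mono (Set.smul_set_mono Set.subset_union_right)
      (Set.smul_set_mono Set.subset_union_right)
  · rcases eq_or_ne i j with rfl | hij
    · exact Set.disjoint_smul_set.mpr hXY
    · exact (ht hij).mono (Set.smul_set_mono Set.subset_union_left)
        (Set.smul_set_mono Set.subset_union_right)

end PingPong

theorem MonoidHom.injective_noncommCoprod_of_comp {M N P Q : Type*} [Group M] [Group N]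
    [Group P] [Monoid Q] (f : M →* P) (g : N →* P) (comm : ∀ m n, Commute (f m) (g n))
    (d : P →* Q) (hf : Injective (d.comp f)) (hdg : d.comp g = 1) (hg : Injective g) :
    Injective (f.noncommCoprod g comm) := by
  rw [injective_iff_map_eq_one]
  rintro ⟨m, n⟩ (h : f m * g n = 1)
  have hdgn : d (g n) = 1 := DFunLike.congr_fun hdg n
  have hm : m = 1 := (injective_iff_map_eq_one _).mp hf m <| by
    simpa [hdgn] using congr(d $h)
  have hn : n = 1 := (injective_iff_map_eq_one _).mp hg n <| by simpa [hm] using h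
  simp [hm, hn]

namespace Matrix.GeneralLinearGroup

def lowerUnipotent (R : Type*) [Ring R] : GL (Fin 2) R :=
  ⟨!![1, 0; 1, 1], !![1, 0; -1, 1], by simp [one_fin_two], by simp [one_fin_two]⟩

lemma det_lowerUnipotent (R : Type*) [CommRing R] : det (lowerUnipotent R) = 1 := by
  ext; simp [lowerUnipotent, det_fin_two_of]

variable {K : Type*} [Field K] [DecidableEq K]

lemma upperRightHom_smul_coe (x z : K) :
    upperRightHom x • (z : OnePoint K) = ↑(z + x) := by
  simp [smul_some_eq_ite]

lemma lowerUnipotent_smul_infty : lowerUnipotent K • (∞ : OnePoint K) = (1 : K) := by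
  simp [smul_infty_eq_ite, lowerUnipotent]

lemma lowerUnipotent_smul_coe {z : K} (hz : z + 1 ≠ 0) :
    lowerUnipotent K • (z : OnePoint K) = ↑(z / (z + 1)) := by
  simp [smul_some_eq_ite, lowerUnipotent, hz]

end Matrix.GeneralLinearGroup

lemma lowerUnipotent_smul_compl_closedBall_subset :
    lowerUnipotent ℂ • ((↑) '' closedBall (-1 : ℂ) 1 : Set (OnePoint ℂ))ᶜ ⊆
      (↑) '' ball (1 : ℂ) 1 := by
  rintro _ ⟨w, hw, rfl⟩
  induction w using OnePoint.rec with
  | infty => exact ⟨1, mem_ball_self one_pos, lowerUnipotent_smul_infty.symm⟩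
  | coe z =>
    have hz : 1 < ‖z + 1‖ := by
      simpa [dist_eq_norm] using fun h : z ∈ closedBall (-1) 1 => hw ⟨z, h, rfl⟩
    have hz0 : z + 1 ≠ 0 := norm_pos_iff.mp (one_pos.trans hz)
    refine ⟨z / (z + 1), ?_, (lowerUnipotent_smul_coe hz0).symm⟩
    have : z / (z + 1) - 1 = -(z + 1)⁻¹ := by field_simp; ring
    rw [mem_ball, dist_eq_norm, this, norm_neg, norm_inv]
    exact inv_lt_one_of_one_lt₀ hz

lemma pairwise_disjoint_upperRightHom_smul_closedBall :
    Pairwise (Disjoint on fun k : ℕ =>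
      upperRightHom (5 * k : ℂ) • ((↑) '' closedBall (0 : ℂ) 2 : Set (OnePoint ℂ))) := by
  intro i j hij
  have hdist : 4 < dist (5 * i : ℂ) (5 * j) := by
    rw [dist_eq_norm, ← mul_sub, norm_mul, ← dist_eq_norm, ← Complex.ofReal_natCast i,
      ← Complex.ofReal_natCast j, Complex.isometry_ofReal.dist_eq, Nat.dist_cast_real]
    norm_num
    linarith [Nat.pairwise_one_le_dist hij]
  simp only [onFun, Set.disjoint_left, Set.mem_smul_set]
  rintro _ ⟨_, ⟨z, hz, rfl⟩, rfl⟩ ⟨_, ⟨w, hw, rfl⟩, h⟩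
  rw [upperRightHom_smul_coe, upperRightHom_smul_coe, coe_eq_coe] at h
  rw [mem_closedBall_zero_iff] at hz hw
  have : dist (5 * i : ℂ) (5 * j) = ‖w - z‖ := by
    rw [dist_eq_norm]; congr 1; linear_combination -h
  linarith [norm_sub_le w z]

theorem injective_lift_conj_lowerUnipotent :
    Injective (FreeGroup.lift fun k : ℕ =>
      upperRightHom (5 * k : ℂ) * lowerUnipotent ℂ * (upperRightHom (5 * k : ℂ))⁻¹) := by
  have hXY : Disjoint ((↑) '' ball (1 : ℂ) 1 : Set (OnePoint ℂ))
      ((↑) '' closedBall (-1 : ℂ) 1) :=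
    (Set.disjoint_image_iff coe_injective).mpr <|
      ball_disjoint_closedBall (by norm_num [dist_eq_norm])
  have hsub : ((↑) '' ball (1 : ℂ) 1 ∪ (↑) '' closedBall (-1 : ℂ) 1 : Set (OnePoint ℂ))
      ⊆ (↑) '' closedBall (0 : ℂ) 2 := by
    rw [← Set.image_union]
    refine Set.image_mono (Set.union_subset (ball_subset_closedBall.trans ?_) ?_) <;>
      exact closedBall_subset_closedBall' (by norm_num [dist_eq_norm])
  refine FreeGroup.injective_lift_conj_of_ping_pong _ _ ?_ hXY (fun i j hij => ?_)
    lowerUnipotent_smul_compl_closedBall_subset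
  · exact ⟨_, 1, mem_ball_self one_pos, rfl⟩
  · exact (pairwise_disjoint_upperRightHom_smul_closedBall hij).mono
      (Set.smul_set_mono hsub) (Set.smul_set_mono hsub)

noncomputable def aevalDFinsupp {A : Type*} [CommRing A] (x : A) : (Π₀ _ : ℕ, ℤ) →+ A :=
  (aeval x).toAddMonoidHom.comp
    ((basisMonomials ℤ).repr.symm.toAddMonoidHom.comp finsuppAddEquivDFinsupp.symm.toAddMonoidHom)

theorem Transcendental.injective_aevalDFinsupp {A : Type*} [CommRing A] {x : A}
    (hx : Transcendental ℤ x) : Injective (aevalDFinsupp x) :=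
  (transcendental_iff_injective.mp hx).comp <|
    (basisMonomials ℤ).repr.symm.injective.comp finsuppAddEquivDFinsupp.symm.injective

noncomputable def Complex.expOfRealUnits : Multiplicative ℝ →* ℂˣ where
  toFun r := Units.mk0 (Complex.exp r.toAdd) (Complex.exp_ne_zero _)
  map_one' := by ext; simp
  map_mul' r s := by ext; simp [Complex.exp_add]

theorem Complex.expOfRealUnits_sq_injective : Injective fun r => expOfRealUnits r ^ 2 := by
  intro r s h
  have h' : Complex.exp (2 * r.toAdd : ℝ) = Complex.exp (2 * s.toAdd : ℝ) := by
    simpa [expOfRealUnits, Units.ext_iff, ← Complex.exp_nat_mul] using h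
  rw [← Complex.ofReal_exp, ← Complex.ofReal_exp, Complex.ofReal_inj, Real.exp_eq_exp] at h'
  exact Multiplicative.toAdd.injective (by linarith)

/-- The direct product `A × F`, of a free abelian group `A` of countably infinite rank
with the free group `F` on countably many generators, embeds into `GL₂(ℂ)`. -/
theorem stmt_11 :
    ∃ f : (Multiplicative (Π₀ _ : ℕ, ℤ) × FreeGroup ℕ) →* GL (Fin 2) ℂ,
      Function.Injective f := by
  set ψ := aevalDFinsupp (liouvilleNumber 3)
  set χ : Multiplicative (Π₀ _ : ℕ, ℤ) →* GL (Fin 2) ℂ :=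
    (GeneralLinearGroup.scalar (Fin 2)).comp (Complex.expOfRealUnits.comp ψ.toMultiplicative)
  set ρ : FreeGroup ℕ →* GL (Fin 2) ℂ := FreeGroup.lift fun k : ℕ =>
    upperRightHom (5 * k : ℂ) * lowerUnipotent ℂ * (upperRightHom (5 * k : ℂ))⁻¹
  have hcomm (a w) : Commute (χ a) (ρ w) := GeneralLinearGroup.scalar_commute _ _
  have hdetχ :
      ⇑(det.comp χ) = (fun r => Complex.expOfRealUnits r ^ 2) ∘ ψ.toMultiplicative := by
    ext a; simp [χ, det_scalar]
  have hdetρ : det.comp ρ = 1 := FreeGroup.ext_hom _ _ fun k => by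
    simp [ρ, det_lowerUnipotent ℂ, -upperRightHom_apply]
  refine ⟨χ.noncommCoprod ρ hcomm, χ.injective_noncommCoprod_of_comp ρ hcomm det ?_ hdetρ
    injective_lift_conj_lowerUnipotent⟩
  rw [hdetχ]
  exact Complex.expOfRealUnits_sq_injective.comp
    (transcendental_liouvilleNumber (by norm_num)).injective_aevalDFinsupp
end
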